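/- arXiv:1409.6382 — 4 statements merged into one kernel-verified Lean document; each statement's English description precedes it below -/
import Mathlib

section
/- Let D ⊆ G^m be an indecomposable group code and α ≥ 1. Then Aut_GC(D^α) is isomorphic as a group to the semidirect product (Aut_GC(D))^α ⋊ S_α, where S_α acts on (Aut_GC(D))^α by permuting the coordinates. -/
section GroupCodes
variable {G : Type*} [Group G] [DecidableEq G]

/-- The canonical splitting homomorphism `G^{n+m} → G^n × G^m`. -/
def splitHom (G : Type*) [Group G] (n m : ℕ) :
    (Fin (n + m) → G) →* (Fin n → G) × (Fin m → G) where
  toFun z := (fun i => z (Fin.castAdd m i), fun j => z (Fin.natAdd n j))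
  map_one' := rfl
  map_mul' _ _ := rfl

/-- Direct sum of two group codes, as a subgroup of `G^{n+m}`. -/
def gcSum {n m : ℕ} (C : Subgroup (Fin n → G)) (D : Subgroup (Fin m → G)) :
    Subgroup (Fin (n + m) → G) :=
  (C.prod D).comap (splitHom G n m)

/-- `φ` is a morphism of group codes from `C` to `D`. -/
def IsGroupCodeHom {n m : ℕ} (C : Subgroup (Fin n → G)) (D : Subgroup (Fin m → G))
    (φ : (Fin n → G) → (Fin m → G)) : Prop :=
  (∀ x y : Fin n → G, φ (x * y) = φ x * φ y) ∧ (∀ x ∈ C, φ x ∈ D) ∧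
    ∀ x y : Fin n → G, hammingDist (φ x) (φ y) ≤ hammingDist x y

/-- The group codes `C` and `D` are isomorphic as group codes. -/
def GroupCodeIso {n m : ℕ} (C : Subgroup (Fin n → G)) (D : Subgroup (Fin m → G)) : Prop :=
  ∃ (φ : (Fin n → G) → (Fin m → G)) (ψ : (Fin m → G) → (Fin n → G)),
    IsGroupCodeHom C D φ ∧ IsGroupCodeHom D C ψ ∧
      Function.LeftInverse ψ φ ∧ Function.RightInverse ψ φ

/-- A group code is decomposable if it is isomorphic, as a group code, to a direct sum
of two group codes of positive lengths. -/
def GCDecomposable {n : ℕ} (C : Subgroup (Fin n → G)) : Prop :=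
  ∃ (p q : ℕ) (D : Subgroup (Fin p → G)) (E : Subgroup (Fin q → G)),
    0 < p ∧ 0 < q ∧ GroupCodeIso C (gcSum D E)

/-- Reindexing homomorphism along an equality of lengths. -/
def reindexHom (G : Type*) [Group G] {a b : ℕ} (h : a = b) :
    (Fin b → G) →* (Fin a → G) where
  toFun z := fun i => z (Fin.cast h i)
  map_one' := rfl
  map_mul' _ _ := rfl

/-- Direct sum of a finite family of group codes (of possibly different lengths). -/
def gcMultiSum : {k : ℕ} → {len : Fin k → ℕ} →
    (∀ i, Subgroup (Fin (len i) → G)) → Subgroup (Fin (∑ i, len i) → G)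
  | 0, _, _ => ⊤
  | k + 1, len, D =>
    (gcSum (D 0) (gcMultiSum (fun i => D i.succ))).comap
      (reindexHom G (a := len 0 + ∑ i : Fin k, len i.succ) (b := ∑ i, len i)
        (Fin.sum_univ_succ len).symm)

/-- Direct sum of `α` copies of the group code `D`. -/
def gcPow {m : ℕ} (D : Subgroup (Fin m → G)) (α : ℕ) :
    Subgroup (Fin (∑ _ : Fin α, m) → G) :=
  gcMultiSum (fun _ : Fin α => D)

/-- The group of group-code automorphisms of a group code `C ⊆ G^n`:  group automorphisms
of `G^n` that preserve the Hamming distance and map `C` onto `C`. -/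
def AutGC {n : ℕ} (C : Subgroup (Fin n → G)) : Subgroup (MulAut (Fin n → G)) where
  carrier := {φ | (∀ x y, hammingDist (φ x) (φ y) = hammingDist x y) ∧
    ∀ x, φ x ∈ C ↔ x ∈ C}
  one_mem' := ⟨fun _ _ => rfl, fun _ => Iff.rfl⟩
  mul_mem' := by
    rintro φ ψ ⟨hφ1, hφ2⟩ ⟨hψ1, hψ2⟩
    exact ⟨fun x y => (hφ1 (ψ x) (ψ y)).trans (hψ1 x y),
      fun x => (hφ2 (ψ x)).trans (hψ2 x)⟩
  inv_mem' := by
    rintro φ ⟨h1, h2⟩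
    refine ⟨fun x y => ?_, fun x => ?_⟩
    · have := h1 (φ⁻¹ x) (φ⁻¹ y)
      rw [MulAut.apply_inv_self, MulAut.apply_inv_self] at this
      exact this.symm
    · have := h2 (φ⁻¹ x)
      rw [MulAut.apply_inv_self] at this
      exact this.symm

/-- The action of `S_α` on `M^α` by permutation of coordinates, as a homomorphism
into the automorphism group. -/
def permActionHom (M : Type*) [Monoid M] (α : ℕ) :
    Equiv.Perm (Fin α) →* MulAut (Fin α → M) where
  toFun σ :=
    { toFun := fun f i => f (σ⁻¹ i)
      invFun := fun f i => f (σ i)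
      left_inv := fun f => by funext i; simp
      right_inv := fun f => by funext i; simp
      map_mul' := fun _ _ => rfl }
  map_one' := by ext f i; simp
  map_mul' σ τ := by ext f i; simp [mul_inv_rev]

/-- A cyclic group code: closed under the cyclic shift of coordinates. -/
def IsCyclicGC {n : ℕ} (C : Subgroup (Fin n → G)) : Prop :=
  ∀ x ∈ C, (x ∘ finRotate n) ∈ C

end GroupCodes
section GCAux

open Finset

variable {G : Type*} [Group G] [DecidableEq G]

/-- Weight = Hamming norm (multiplicative version). -/
def gcWt {n : ℕ} (x : Fin n → G) : ℕ := hammingDist x 1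

lemma gcWt_def {n : ℕ} (x : Fin n → G) :
    gcWt x = #(Finset.univ.filter fun k => x k ≠ 1) := by
  rfl

lemma hammingDist_eq_gcWt {n : ℕ} (x y : Fin n → G) :
    hammingDist x y = gcWt (x * y⁻¹) := by
  show #(Finset.univ.filter fun k => x k ≠ y k) = #(Finset.univ.filter fun k => x k * (y k)⁻¹ ≠ 1)
  congr 1
  apply Finset.filter_congr
  intro k _
  simp [mul_inv_eq_one]

/-- A weight-preserving homomorphism preserves Hamming distances. -/
lemma isom_of_wt_preserving {n n' : ℕ} (Ψ : (Fin n → G) →* (Fin n' → G))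
    (hw : ∀ x, gcWt (Ψ x) = gcWt x) (x y : Fin n → G) :
    hammingDist (Ψ x) (Ψ y) = hammingDist x y := by
  rw [hammingDist_eq_gcWt, hammingDist_eq_gcWt, ← map_inv, ← map_mul, hw]

/-- Support of a vector, as a finset. -/
def gcSupp {n : ℕ} (x : Fin n → G) : Finset (Fin n) := Finset.univ.filter fun k => x k ≠ 1

lemma gcWt_eq_card_supp {n : ℕ} (x : Fin n → G) : gcWt x = #(gcSupp x) := rfl

lemma mem_gcSupp {n : ℕ} {x : Fin n → G} {k : Fin n} : k ∈ gcSupp x ↔ x k ≠ 1 := by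
  simp [gcSupp]

/-- Restriction of a vector to a set of coordinates (identity elsewhere). -/
def gcRes {n : ℕ} (S : Finset (Fin n)) (x : Fin n → G) : Fin n → G :=
  fun k => if k ∈ S then x k else 1

lemma gcRes_mul {n : ℕ} (S : Finset (Fin n)) (x y : Fin n → G) :
    gcRes S (x * y) = gcRes S x * gcRes S y := by
  funext k; by_cases h : k ∈ S <;> simp [gcRes, h]

lemma gcRes_mul_compl {n : ℕ} (S : Finset (Fin n)) (x : Fin n → G) :
    gcRes S x * gcRes Sᶜ x = x := by
  funext k; by_cases h : k ∈ S <;> simp [gcRes, h, Finset.mem_compl]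

lemma gcRes_res {n : ℕ} (S T : Finset (Fin n)) (x : Fin n → G) :
    gcRes T (gcRes S x) = gcRes (S ∩ T) x := by
  funext k
  by_cases hT : k ∈ T <;> by_cases hS : k ∈ S <;>
    simp [gcRes, hT, hS, Finset.mem_inter]

lemma gcSupp_res {n : ℕ} (S : Finset (Fin n)) (x : Fin n → G) :
    gcSupp (gcRes S x) ⊆ S := by
  intro k hk
  rw [mem_gcSupp] at hk
  by_contra h
  simp [gcRes, h] at hk

/-- `S` splits the code `C`: restriction to `S` maps `C` into itself. -/
def GCSplits {n : ℕ} (C : Subgroup (Fin n → G)) (S : Finset (Fin n)) : Prop :=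
  ∀ x ∈ C, gcRes S x ∈ C

lemma GCSplits.compl {n : ℕ} {C : Subgroup (Fin n → G)} {S : Finset (Fin n)}
    (h : GCSplits C S) : GCSplits C Sᶜ := by
  intro x hx
  have h1 : gcRes Sᶜ x = (gcRes S x)⁻¹ * x := by
    funext k; by_cases hk : k ∈ S <;> simp [gcRes, hk, Finset.mem_compl]
  rw [h1]
  exact C.mul_mem (C.inv_mem (h x hx)) hx

lemma GCSplits.inter {n : ℕ} {C : Subgroup (Fin n → G)} {S T : Finset (Fin n)}
    (hS : GCSplits C S) (hT : GCSplits C T) : GCSplits C (S ∩ T) := by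
  intro x hx
  rw [← gcRes_res]
  exact hT _ (hS x hx)

end GCAux
section GCIdx

set_option linter.unusedSectionVars false

open Finset

variable {G : Type*} [Group G] [DecidableEq G] {m : ℕ}

lemma gc_sum_const (β : ℕ) : (∑ _ : Fin β, m) = β * m := by
  simp [Finset.sum_const, Finset.card_univ]

/-- The index of coordinate `j` of block `i` inside `Fin (∑ _ : Fin β, m)`. -/
def gcPidx (m : ℕ) : (β : ℕ) → Fin β → Fin m → Fin (∑ _ : Fin β, m) :=
  fun β i j => ⟨i.val * m + j.val, by
    rw [gc_sum_const]
    calc i.val * m + j.val < i.val * m + m := by omega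
    _ ≤ β * m := by
      have : i.val + 1 ≤ β := i.isLt
      calc i.val * m + m = (i.val + 1) * m := by ring
      _ ≤ β * m := Nat.mul_le_mul_right m this⟩

lemma gcPidx_val (β : ℕ) (i : Fin β) (j : Fin m) :
    (gcPidx m β i j).val = i.val * m + j.val := rfl

lemma gcPidx_injective (β : ℕ) :
    Function.Injective (fun p : Fin β × Fin m => gcPidx m β p.1 p.2) := by
  rintro ⟨i, j⟩ ⟨i', j'⟩ h
  have hv : i.val * m + j.val = i'.val * m + j'.val := by
    simpa [gcPidx_val] using congrArg Fin.val h
  have hj : j.val < m := j.isLt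
  have hj' : j'.val < m := j'.isLt
  have hi : i.val = i'.val := by
    rcases Nat.lt_trichotomy i.val i'.val with h1 | h1 | h1
    · exfalso; have : i.val + 1 ≤ i'.val := h1; nlinarith [Nat.mul_le_mul_right m this]
    · exact h1
    · exfalso; have : i'.val + 1 ≤ i.val := h1; nlinarith [Nat.mul_le_mul_right m this]
  have : j.val = j'.val := by rw [hi] at hv; omega
  simp [Prod.ext_iff, Fin.ext_iff, hi, this]

/-- The block/coordinate indexing equivalence. -/
noncomputable def gcIdxEquiv (m β : ℕ) : Fin β × Fin m ≃ Fin (∑ _ : Fin β, m) :=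
  Equiv.ofBijective _ ((Fintype.bijective_iff_injective_and_card
    (fun p : Fin β × Fin m => gcPidx m β p.1 p.2)).2
    ⟨gcPidx_injective β, by simp [gc_sum_const]⟩)

lemma gcIdxEquiv_apply (β : ℕ) (i : Fin β) (j : Fin m) :
    gcIdxEquiv m β (i, j) = gcPidx m β i j := rfl

/-- Membership in `gcPow` in terms of blocks. -/
lemma mem_gcPow_iff (D : Subgroup (Fin m → G)) :
    ∀ (β : ℕ) (x : Fin (∑ _ : Fin β, m) → G),
      x ∈ gcPow D β ↔ ∀ i, (fun j => x (gcPidx m β i j)) ∈ D := by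
  intro β
  induction β with
  | zero =>
    intro x
    simp only [gcPow, gcMultiSum, Subgroup.mem_top, true_iff]
    exact fun i => i.elim0
  | succ β ih =>
    intro x
    have hunfold : x ∈ gcPow D (β + 1) ↔
        ((fun j : Fin m => x (Fin.cast (Fin.sum_univ_succ (fun _ : Fin (β+1) => m)).symm
            (Fin.castAdd _ j))) ∈ D ∧
         (fun t => x (Fin.cast (Fin.sum_univ_succ (fun _ : Fin (β+1) => m)).symm
            (Fin.natAdd m t))) ∈ gcPow D β) := by
      rw [gcPow]
      show x ∈ gcMultiSum _ ↔ _
      rw [gcMultiSum]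
      rw [Subgroup.mem_comap, gcSum, Subgroup.mem_comap, Subgroup.mem_prod]
      exact Iff.rfl
    rw [hunfold, ih]
    rw [Fin.forall_fin_succ]
    constructor
    · rintro ⟨h0, hs⟩
      refine ⟨?_, fun i => ?_⟩
      · convert h0 using 2 with j
        congr 1
        apply Fin.ext
        simp [gcPidx_val]
      · convert hs i using 2 with j
        congr 1
        apply Fin.ext
        simp [gcPidx_val]
        ring
    · rintro ⟨h0, hs⟩
      refine ⟨?_, fun i => ?_⟩
      · convert h0 using 2 with j
        congr 1
        apply Fin.ext
        simp [gcPidx_val]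
      · convert hs i using 2 with j
        congr 1
        apply Fin.ext
        simp [gcPidx_val]
        ring

end GCIdx
section GCDecomp

set_option linter.unusedSectionVars false

open Finset

variable {G : Type*} [Group G] [DecidableEq G] {m : ℕ}

lemma hammingDist_comp_equiv {n n' : ℕ} (ε : Fin n' ≃ Fin n) (x y : Fin n → G) :
    hammingDist (fun u => x (ε u)) (fun u => y (ε u)) = hammingDist x y := by
  show #(Finset.univ.filter fun u => x (ε u) ≠ y (ε u))
      = #(Finset.univ.filter fun k => x k ≠ y k)
  have himg : (Finset.univ.filter fun u => x (ε u) ≠ y (ε u))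
      = (Finset.univ.filter fun k => x k ≠ y k).image ε.symm := by
    ext u
    simp only [Finset.mem_filter, Finset.mem_univ, true_and, Finset.mem_image]
    constructor
    · intro h; exact ⟨ε u, by simpa using h, by simp⟩
    · rintro ⟨k, hk, rfl⟩; simpa using hk
  rw [himg, Finset.card_image_of_injective _ ε.symm.injective]

/-- Vectors supported inside `S`, as a subgroup. -/
def gcSuppIn (S : Finset (Fin m)) : Subgroup (Fin m → G) where
  carrier := {x | ∀ k ∉ S, x k = 1}
  one_mem' := fun _ _ => rfl
  mul_mem' := by intro a b ha hb k hk; simp [ha k hk, hb k hk]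
  inv_mem' := by intro a ha k hk; simp [ha k hk]

lemma mem_gcSuppIn {S : Finset (Fin m)} {x : Fin m → G} :
    x ∈ gcSuppIn S ↔ ∀ k ∉ S, x k = 1 := Iff.rfl

/-- A nontrivial splitting set makes a group code decomposable. -/
lemma gcDecomposable_of_splits {D : Subgroup (Fin m → G)} {S : Finset (Fin m)}
    (hS : GCSplits D S) (h1 : S.Nonempty) (h2 : S ≠ Finset.univ) :
    GCDecomposable D := by
  classical
  set p := S.card with hp
  set q := Sᶜ.card with hq
  have hpq : p + q = m := by
    rw [hp, hq, Finset.card_add_card_compl, Fintype.card_fin]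
  let oS : Fin p ≃o S := S.orderIsoOfFin rfl
  let oSc : Fin q ≃o (Sᶜ : Finset (Fin m)) := (Sᶜ).orderIsoOfFin rfl
  let ε : Fin (p + q) ≃ Fin m :=
    finSumFinEquiv.symm.trans ((Equiv.sumCongr oS.toEquiv
      (oSc.toEquiv.trans (Equiv.subtypeEquivRight (fun x => Finset.mem_compl)))).trans
      (Equiv.sumCompl (· ∈ S)))
  have hA : ∀ i : Fin p, ε (Fin.castAdd q i) ∈ S := by
    intro i
    show ((finSumFinEquiv.symm.trans _) (Fin.castAdd q i)) ∈ S
    rw [Equiv.trans_apply, finSumFinEquiv_symm_apply_castAdd]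
    simp only [Equiv.trans_apply, Equiv.sumCongr_apply, Sum.map_inl, Equiv.sumCompl_apply_inl]
    exact (oS i).2
  have hB : ∀ t : Fin q, ε (Fin.natAdd p t) ∉ S := by
    intro t
    show ((finSumFinEquiv.symm.trans _) (Fin.natAdd p t)) ∉ S
    rw [Equiv.trans_apply, finSumFinEquiv_symm_apply_natAdd]
    simp only [Equiv.trans_apply, Equiv.sumCongr_apply, Sum.map_inr, Equiv.sumCompl_apply_inr]
    exact ((Equiv.subtypeEquivRight (fun x => Finset.mem_compl)) (oSc t)).2
  let proj1 : (Fin m → G) →* (Fin p → G) :=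
    { toFun := fun x => fun i => x (ε (Fin.castAdd q i))
      map_one' := rfl
      map_mul' := fun _ _ => rfl }
  let proj2 : (Fin m → G) →* (Fin q → G) :=
    { toFun := fun x => fun t => x (ε (Fin.natAdd p t))
      map_one' := rfl
      map_mul' := fun _ _ => rfl }
  let D₁ : Subgroup (Fin p → G) := (D ⊓ gcSuppIn S).map proj1
  let D₂ : Subgroup (Fin q → G) := (D ⊓ gcSuppIn Sᶜ).map proj2
  refine ⟨p, q, D₁, D₂, Finset.card_pos.2 h1, ?_, ?_⟩
  · rw [hq, Finset.card_pos]
    obtain ⟨k, hk⟩ : ∃ k, k ∉ S := by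
      by_contra h
      push_neg at h
      exact h2 (Finset.eq_univ_iff_forall.2 h)
    exact ⟨k, Finset.mem_compl.2 hk⟩
  · refine ⟨fun x => fun u => x (ε u), fun z => fun k => z (ε.symm k), ⟨fun x y => rfl, ?_, ?_⟩,
      ⟨fun x y => rfl, ?_, ?_⟩, ?_, ?_⟩
    · -- φ maps D into gcSum D₁ D₂
      intro x hx
      rw [gcSum, Subgroup.mem_comap, Subgroup.mem_prod]
      constructor
      · refine ⟨gcRes S x, ⟨hS x hx, fun k hk => by simp [gcRes, hk]⟩, ?_⟩
        funext i
        show gcRes S x (ε (Fin.castAdd q i)) = x (ε (Fin.castAdd q i))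
        simp [gcRes, hA i]
      · refine ⟨gcRes Sᶜ x, ⟨hS.compl x hx, fun k hk => by simp [gcRes, hk]⟩, ?_⟩
        funext t
        show gcRes Sᶜ x (ε (Fin.natAdd p t)) = x (ε (Fin.natAdd p t))
        simp [gcRes, Finset.mem_compl, hB t]
    · intro x y
      exact le_of_eq (hammingDist_comp_equiv ε x y)
    · -- ψ maps gcSum D₁ D₂ into D
      intro z hz
      rw [gcSum, Subgroup.mem_comap, Subgroup.mem_prod] at hz
      obtain ⟨⟨x₁, ⟨hx₁D, hx₁s⟩, heq₁⟩, ⟨x₂, ⟨hx₂D, hx₂s⟩, heq₂⟩⟩ := hz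
      have hcases : ∀ u : Fin (p + q), (∃ i, u = Fin.castAdd q i) ∨ (∃ t, u = Fin.natAdd p t) :=
        fun u => Fin.addCases (fun i => Or.inl ⟨i, rfl⟩) (fun t => Or.inr ⟨t, rfl⟩) u
      have key : (fun k => z (ε.symm k)) = x₁ * x₂ := by
        funext k
        rcases hcases (ε.symm k) with ⟨i, hu⟩ | ⟨t, hu⟩
        · have hkS : k ∈ S := by
            have : ε (Fin.castAdd q i) = k := by rw [← hu, Equiv.apply_symm_apply]
            rw [← this]; exact hA i
          have hx2 : x₂ k = 1 := hx₂s k (by simp [Finset.mem_compl, hkS])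
          have h1' : x₁ (ε (Fin.castAdd q i)) = z (Fin.castAdd q i) := congrFun heq₁ i
          have hek : ε (Fin.castAdd q i) = k := by rw [← hu, Equiv.apply_symm_apply]
          show z (ε.symm k) = x₁ k * x₂ k
          rw [hu, hx2, mul_one, ← hek, h1']
        · have hkS : k ∉ S := by
            have : ε (Fin.natAdd p t) = k := by rw [← hu, Equiv.apply_symm_apply]
            rw [← this]; exact hB t
          have hx1 : x₁ k = 1 := hx₁s k hkS
          have h2' : x₂ (ε (Fin.natAdd p t)) = z (Fin.natAdd p t) := congrFun heq₂ t
          have hek : ε (Fin.natAdd p t) = k := by rw [← hu, Equiv.apply_symm_apply]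
          show z (ε.symm k) = x₁ k * x₂ k
          rw [hu, hx1, one_mul, ← hek, h2']
      show (fun k => z (ε.symm k)) ∈ D
      rw [key]
      exact D.mul_mem hx₁D hx₂D
    · intro x y
      have := hammingDist_comp_equiv ε.symm x y
      exact le_of_eq this
    · intro x
      funext k
      simp
    · intro z
      funext u
      simp
  
end GCDecomp
section GCMonomial

set_option linter.unusedSectionVars false

open Finset

variable {G : Type*} [Group G] [DecidableEq G]

lemma gcSplits_trivial {m : ℕ} {D : Subgroup (Fin m → G)} (hind : ¬ GCDecomposable D)
    {S : Finset (Fin m)} (hS : GCSplits D S) : S = ∅ ∨ S = Finset.univ := by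
  by_contra h
  push_neg at h
  exact hind (gcDecomposable_of_splits hS h.1 h.2)

lemma gcSupp_mulSingle {n : ℕ} (i : Fin n) {g : G} (hg : g ≠ 1) :
    gcSupp (Pi.mulSingle i g) = {i} := by
  ext k
  rw [mem_gcSupp, Finset.mem_singleton]
  rcases eq_or_ne k i with rfl | hk
  · simp [hg]
  · simp [Pi.mulSingle_eq_of_ne hk, hk]

lemma gcSupp_mul_subset {n : ℕ} (a b : Fin n → G) :
    gcSupp (a * b) ⊆ gcSupp a ∪ gcSupp b := by
  intro k hk
  rw [mem_gcSupp] at hk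
  rw [Finset.mem_union, mem_gcSupp, mem_gcSupp]
  by_contra h
  push_neg at h
  exact hk (by simp [Pi.mul_apply, h.1, h.2])

/-- Any Hamming-isometric automorphism of `G^n` permutes supports by a coordinate
permutation. -/
lemma gc_monomial {n : ℕ} [Nontrivial G] (φ : MulAut (Fin n → G))
    (hiso : ∀ x y, hammingDist (φ x) (φ y) = hammingDist x y) :
    ∃ π : Equiv.Perm (Fin n), ∀ x, gcSupp (φ x) = (gcSupp x).image π := by
  classical
  obtain ⟨g₀, hg₀⟩ : ∃ g : G, g ≠ 1 := exists_ne 1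
  have hwt : ∀ x, gcWt (φ x) = gcWt x := by
    intro x
    have := hiso x 1
    rwa [map_one] at this
  -- the target coordinate of each source coordinate
  have hsing : ∀ i : Fin n, #(gcSupp (φ (Pi.mulSingle i g₀))) = 1 := by
    intro i
    rw [← gcWt_eq_card_supp, hwt, gcWt_eq_card_supp, gcSupp_mulSingle i hg₀,
      Finset.card_singleton]
  choose πf hπf using fun i => Finset.card_eq_one.mp (hsing i)
  -- all images of singles at `i` are supported at `πf i`
  have hsupp : ∀ (i : Fin n) (g : G), gcSupp (φ (Pi.mulSingle i g)) ⊆ {πf i} := by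
    intro i g
    rcases eq_or_ne g 1 with rfl | hg
    · intro k hk
      rw [Pi.mulSingle_one, map_one] at hk
      simp [gcSupp] at hk
    · have hcard1 : #(gcSupp (φ (Pi.mulSingle i g))) = 1 := by
        rw [← gcWt_eq_card_supp, hwt, gcWt_eq_card_supp, gcSupp_mulSingle i hg,
          Finset.card_singleton]
      obtain ⟨k', hk'⟩ := Finset.card_eq_one.mp hcard1
      rw [hk']
      rcases eq_or_ne k' (πf i) with rfl | hne
      · exact subset_refl _
      · exfalso
        have hu : gcWt (φ (Pi.mulSingle i (g₀ * g))) ≤ 1 := by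
          rw [hwt, gcWt_eq_card_supp]
          calc #(gcSupp (Pi.mulSingle i (g₀ * g))) ≤ #({i} : Finset (Fin n)) := by
                rcases eq_or_ne (g₀ * g) 1 with h' | h'
                · rw [h', Pi.mulSingle_one]
                  apply Finset.card_le_card
                  intro k hk; simp [gcSupp] at hk
                · rw [gcSupp_mulSingle i h']
          _ = 1 := Finset.card_singleton i
        have h2 : 1 < gcWt (φ (Pi.mulSingle i (g₀ * g))) := by
          rw [gcWt_eq_card_supp]
          rw [Finset.one_lt_card]
          refine ⟨πf i, ?_, k', ?_, fun h => hne h.symm⟩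
          · rw [Pi.mulSingle_mul, map_mul, mem_gcSupp]
            have ha : φ (Pi.mulSingle i g₀) (πf i) ≠ 1 := by
              have : πf i ∈ gcSupp (φ (Pi.mulSingle i g₀)) := by rw [hπf]; exact Finset.mem_singleton_self _
              rwa [mem_gcSupp] at this
            have hb : φ (Pi.mulSingle i g) (πf i) = 1 := by
              by_contra hc
              have : πf i ∈ gcSupp (φ (Pi.mulSingle i g)) := mem_gcSupp.2 hc
              rw [hk'] at this
              exact hne (Finset.mem_singleton.mp this).symm
            simp [Pi.mul_apply, ha, hb]
          · rw [Pi.mulSingle_mul, map_mul, mem_gcSupp]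
            have ha : φ (Pi.mulSingle i g₀) k' = 1 := by
              by_contra hc
              have : k' ∈ gcSupp (φ (Pi.mulSingle i g₀)) := mem_gcSupp.2 hc
              rw [hπf] at this
              exact hne (Finset.mem_singleton.mp this)
            have hb : φ (Pi.mulSingle i g) k' ≠ 1 := by
              have : k' ∈ gcSupp (φ (Pi.mulSingle i g)) := by rw [hk']; exact Finset.mem_singleton_self _
              rwa [mem_gcSupp] at this
            simp [Pi.mul_apply, ha, hb]
        omega
  -- injectivity of πf
  have hinj : Function.Injective πf := by
    intro i i' h
    by_contra hne
    have hu2 : gcWt (Pi.mulSingle i g₀ * Pi.mulSingle i' g₀ : Fin n → G) = 2 := by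
      rw [gcWt_eq_card_supp]
      have : gcSupp (Pi.mulSingle i g₀ * Pi.mulSingle i' g₀ : Fin n → G) = {i, i'} := by
        ext k
        rw [mem_gcSupp]
        rw [Finset.mem_insert, Finset.mem_singleton]
        simp only [Pi.mul_apply, Pi.mulSingle_apply]
        rcases eq_or_ne k i with rfl | hki
        · simp [hg₀, hne]
        · rcases eq_or_ne k i' with rfl | hki'
          · simp [hg₀, hki]
          · simp [hki, hki']
      rw [this]
      rw [Finset.card_insert_of_notMem (by simp [hne]), Finset.card_singleton]
    have hble : gcWt (φ (Pi.mulSingle i g₀ * Pi.mulSingle i' g₀)) ≤ 1 := by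
      rw [map_mul, gcWt_eq_card_supp]
      calc #(gcSupp (φ (Pi.mulSingle i g₀) * φ (Pi.mulSingle i' g₀)))
          ≤ #({πf i} : Finset (Fin n)) := by
            apply Finset.card_le_card
            intro k hk
            have := gcSupp_mul_subset (φ (Pi.mulSingle i g₀)) (φ (Pi.mulSingle i' g₀)) hk
            rw [Finset.mem_union] at this
            rcases this with h' | h'
            · exact hsupp i g₀ h'
            · rw [h] at *; exact hsupp i' g₀ h'
      _ = 1 := Finset.card_singleton _
    rw [hwt, hu2] at hble
    omega
  refine ⟨Equiv.ofBijective πf (Finite.injective_iff_bijective.mp hinj), fun x => ?_⟩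
  have hsub : gcSupp (φ x) ⊆ (gcSupp x).image πf := by
    intro k hk
    rw [mem_gcSupp] at hk
    by_contra hknot
    apply hk
    have hx : x = Finset.univ.noncommProd (fun i => Pi.mulSingle i (x i))
        (fun i _ j _ _ => Pi.mulSingle_apply_commute x i j) :=
      (Finset.noncommProd_mulSingle x).symm
    have e1 := Finset.map_noncommProd Finset.univ (fun i => Pi.mulSingle i (x i))
      (fun i _ j _ _ => Pi.mulSingle_apply_commute x i j) φ
    have e2 := Finset.map_noncommProd Finset.univ (fun i => φ (Pi.mulSingle i (x i)))
      (fun i _ j _ _ => (Pi.mulSingle_apply_commute x i j).map φ)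
      (Pi.evalMonoidHom (fun _ : Fin n => G) k)
    have hthis : φ x k = Finset.univ.noncommProd (fun i => φ (Pi.mulSingle i (x i)) k)
        (fun i _ j _ _ => ((Pi.mulSingle_apply_commute x i j).map φ).map
          (Pi.evalMonoidHom (fun _ : Fin n => G) k)) := by
      calc φ x k = φ (Finset.univ.noncommProd (fun i => Pi.mulSingle i (x i))
            (fun i _ j _ _ => Pi.mulSingle_apply_commute x i j)) k := by rw [← hx]
      _ = _ := (congrFun e1 k).trans e2
    rw [hthis]
    have hone : ∀ i ∈ Finset.univ, φ (Pi.mulSingle i (x i)) k = 1 := by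
      intro i _
      rcases eq_or_ne (x i) 1 with h1 | h1
      · rw [h1, Pi.mulSingle_one, map_one]; rfl
      · by_contra hc
        have hk2 : k ∈ gcSupp (φ (Pi.mulSingle i (x i))) := mem_gcSupp.2 hc
        have := hsupp i (x i) hk2
        rw [Finset.mem_singleton] at this
        apply hknot
        rw [Finset.mem_image]
        exact ⟨i, mem_gcSupp.2 h1, this.symm⟩
    exact (Finset.noncommProd_eq_pow_card _ _ _ 1 hone).trans (one_pow _)
  apply Finset.eq_of_subset_of_card_le
  · intro k hk
    have h2 := hsub hk
    rw [Finset.mem_image] at h2 ⊢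
    obtain ⟨i, hi, rfl⟩ := h2
    exact ⟨i, hi, rfl⟩
  · rw [Finset.card_image_of_injective _ (Equiv.ofBijective πf _).injective]
    rw [← gcWt_eq_card_supp, ← gcWt_eq_card_supp, hwt]

end GCMonomial
section GCBlocks

set_option linter.unusedSectionVars false

open Finset

variable {G : Type*} [Group G] [DecidableEq G] {m α : ℕ}

/-- The `i`-th block of coordinates. -/
noncomputable def gcBlock (m α : ℕ) (i : Fin α) : Finset (Fin (∑ _ : Fin α, m)) :=
  Finset.univ.image (fun j => gcIdxEquiv m α (i, j))

lemma mem_gcBlock {i : Fin α} {k : Fin (∑ _ : Fin α, m)} :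
    k ∈ gcBlock m α i ↔ ((gcIdxEquiv m α).symm k).1 = i := by
  rw [gcBlock, Finset.mem_image]
  constructor
  · rintro ⟨j, _, rfl⟩
    rw [Equiv.symm_apply_apply]
  · intro h
    refine ⟨((gcIdxEquiv m α).symm k).2, Finset.mem_univ _, ?_⟩
    rw [← h]
    exact (gcIdxEquiv m α).apply_symm_apply k

lemma card_gcBlock (i : Fin α) : #(gcBlock m α i) = m := by
  rw [gcBlock, Finset.card_image_of_injective _ (fun j j' h => by
    have := (gcIdxEquiv m α).injective h
    exact (Prod.ext_iff.mp this).2), Finset.card_univ, Fintype.card_fin]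

/-- The `i`-th component of a vector. -/
noncomputable def gcComp (i : Fin α) (x : Fin (∑ _ : Fin α, m) → G) : Fin m → G :=
  fun j => x (gcIdxEquiv m α (i, j))

/-- Extension of a vector in block `i`, identity elsewhere. -/
noncomputable def gcExt (i : Fin α) (y : Fin m → G) : Fin (∑ _ : Fin α, m) → G :=
  fun k => if ((gcIdxEquiv m α).symm k).1 = i then y ((gcIdxEquiv m α).symm k).2 else 1

lemma gcComp_ext (i i' : Fin α) (y : Fin m → G) :
    gcComp i' (gcExt i y) = if i' = i then y else 1 := by
  funext j
  rw [gcComp, gcExt, Equiv.symm_apply_apply]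
  by_cases h : i' = i <;> simp [h]

lemma gcExt_mul (i : Fin α) (y y' : Fin m → G) :
    gcExt i (y * y') = gcExt i y * gcExt i y' := by
  funext k
  rw [gcExt]
  by_cases h : ((gcIdxEquiv m α).symm k).1 = i <;> simp [gcExt, h]

lemma mem_gcPow_iff' (D : Subgroup (Fin m → G)) (x : Fin (∑ _ : Fin α, m) → G) :
    x ∈ gcPow D α ↔ ∀ i, gcComp i x ∈ D :=
  mem_gcPow_iff D α x

lemma gcExt_mem (D : Subgroup (Fin m → G)) {i : Fin α} {y : Fin m → G} (hy : y ∈ D) :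
    gcExt i y ∈ gcPow D α := by
  rw [mem_gcPow_iff']
  intro i'
  rw [gcComp_ext]
  by_cases h : i' = i <;> simp [h, hy, D.one_mem]

lemma gcSupp_ext (i : Fin α) (y : Fin m → G) : gcSupp (gcExt i y) ⊆ gcBlock m α i := by
  intro k hk
  rw [mem_gcSupp, gcExt] at hk
  rw [mem_gcBlock]
  by_contra h
  simp [h] at hk

lemma gcSplits_block (D : Subgroup (Fin m → G)) (i : Fin α) :
    GCSplits (gcPow D α) (gcBlock m α i) := by
  intro x hx
  rw [mem_gcPow_iff'] at hx ⊢
  intro i'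
  have : gcComp i' (gcRes (gcBlock m α i) x) = if i' = i then gcComp i' x else 1 := by
    funext j
    rw [gcComp, gcRes]
    by_cases h : i' = i
    · simp only [h, if_true]
      rw [if_pos (mem_gcBlock.2 (by rw [Equiv.symm_apply_apply]))]
      rw [gcComp]
    · rw [if_neg (fun hc => h (by rw [mem_gcBlock, Equiv.symm_apply_apply] at hc; exact hc))]
      simp [h]
  rw [this]
  by_cases h : i' = i <;> simp [h, hx i, hx i', (gcPow D α).one_mem, D.one_mem]

lemma gcSplits_sub_block (D : Subgroup (Fin m → G)) {S : Finset (Fin (∑ _ : Fin α, m))}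
    {i : Fin α} (hsub : S ⊆ gcBlock m α i) (hS : GCSplits (gcPow D α) S) :
    GCSplits D (Finset.univ.filter fun j => gcIdxEquiv m α (i, j) ∈ S) := by
  intro y hy
  have hx : gcExt i y ∈ gcPow D α := gcExt_mem D hy
  have h2 : gcRes S (gcExt i y) ∈ gcPow D α := hS _ hx
  rw [mem_gcPow_iff'] at h2
  have h3 := h2 i
  have : gcComp i (gcRes S (gcExt i y))
      = gcRes (Finset.univ.filter fun j => gcIdxEquiv m α (i, j) ∈ S) y := by
    funext j
    rw [gcComp, gcRes, gcRes]
    by_cases h : gcIdxEquiv m α (i, j) ∈ S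
    · rw [if_pos h, if_pos (by simp [h]), gcExt, Equiv.symm_apply_apply, if_pos rfl]
    · rw [if_neg h, if_neg (by simp [h])]
  rwa [this] at h3

/-- With an indecomposable `D`, splitting subsets of a block are trivial. -/
lemma gcSplits_block_trivial {D : Subgroup (Fin m → G)} (hind : ¬ GCDecomposable D)
    {S : Finset (Fin (∑ _ : Fin α, m))} {i : Fin α} (hsub : S ⊆ gcBlock m α i)
    (hS : GCSplits (gcPow D α) S) : S = ∅ ∨ S = gcBlock m α i := by
  rcases gcSplits_trivial hind (gcSplits_sub_block D hsub hS) with h | h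
  · left
    rw [Finset.eq_empty_iff_forall_notMem]
    intro k hk
    have hkb := hsub hk
    rw [mem_gcBlock] at hkb
    have : ((gcIdxEquiv m α).symm k).2 ∈ (Finset.univ.filter
        fun j => gcIdxEquiv m α (i, j) ∈ S) := by
      rw [Finset.mem_filter]
      refine ⟨Finset.mem_univ _, ?_⟩
      have : (i, ((gcIdxEquiv m α).symm k).2) = (gcIdxEquiv m α).symm k := by
        rw [← hkb]
      rw [this, Equiv.apply_symm_apply]
      exact hk
    rw [h] at this
    exact absurd this (Finset.notMem_empty _)
  · right
    apply Finset.Subset.antisymm hsub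
    intro k hk
    rw [mem_gcBlock] at hk
    have h2 : ((gcIdxEquiv m α).symm k).2 ∈ (Finset.univ : Finset (Fin m)) := Finset.mem_univ _
    rw [← h] at h2
    rw [Finset.mem_filter] at h2
    have : (i, ((gcIdxEquiv m α).symm k).2) = (gcIdxEquiv m α).symm k := by rw [← hk]
    rw [this, Equiv.apply_symm_apply] at h2
    exact h2.2

/-- Transport of splitting sets along a code automorphism. -/
lemma gcSplits_image {n : ℕ} {C : Subgroup (Fin n → G)} (φ : MulAut (Fin n → G))
    (hmem : ∀ x, φ x ∈ C ↔ x ∈ C) (π : Equiv.Perm (Fin n))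
    (hπ : ∀ x, gcSupp (φ x) = (gcSupp x).image π)
    {S : Finset (Fin n)} (hS : GCSplits C S) : GCSplits C (S.image π) := by
  intro y hy
  set x := φ⁻¹ y with hxdef
  have hyx : φ x = y := by rw [hxdef, MulAut.apply_inv_self]
  have hxC : x ∈ C := by rw [← hyx] at hy; exact (hmem x).mp hy
  have key : gcRes (S.image π) y = φ (gcRes S x) := by
    have hsplit : y = φ (gcRes S x) * φ (gcRes Sᶜ x) := by
      rw [← map_mul, gcRes_mul_compl, hyx]
    funext k
    by_cases hk : k ∈ S.image π
    · have h1 : φ (gcRes Sᶜ x) k = 1 := by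
        by_contra hc
        have : k ∈ gcSupp (φ (gcRes Sᶜ x)) := mem_gcSupp.2 hc
        rw [hπ] at this
        rw [Finset.mem_image] at this hk
        obtain ⟨a, ha, hak⟩ := this
        obtain ⟨b, hb, hbk⟩ := hk
        have : a = b := π.injective (hak.trans hbk.symm)
        rw [this] at ha
        have := gcSupp_res Sᶜ x ha
        rw [Finset.mem_compl] at this
        exact this hb
      rw [gcRes, if_pos hk]
      calc y k = φ (gcRes S x) k * φ (gcRes Sᶜ x) k := by rw [hsplit]; rfl
      _ = φ (gcRes S x) k := by rw [h1, mul_one]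
    · have h1 : φ (gcRes S x) k = 1 := by
        by_contra hc
        have : k ∈ gcSupp (φ (gcRes S x)) := mem_gcSupp.2 hc
        rw [hπ] at this
        apply hk
        rw [Finset.mem_image] at this ⊢
        obtain ⟨a, ha, hak⟩ := this
        exact ⟨a, gcSupp_res S x ha, hak⟩
      rw [gcRes, if_neg hk, h1]
  rw [key]
  exact (hmem _).mpr (hS x hxC)

end GCBlocks
section GCB

set_option linter.unusedSectionVars false

open Finset

variable {G : Type*} [Group G] [DecidableEq G] {m α : ℕ}

lemma card_filter_equiv {A B : Type*} [Fintype A] [Fintype B] [DecidableEq A] [DecidableEq B]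
    (ε : A ≃ B) (P : B → Prop) [DecidablePred P] :
    #(Finset.univ.filter fun a => P (ε a)) = #(Finset.univ.filter P) := by
  have himg : (Finset.univ.filter fun a => P (ε a))
      = (Finset.univ.filter P).image ε.symm := by
    ext a
    simp only [Finset.mem_filter, Finset.mem_univ, true_and, Finset.mem_image]
    constructor
    · intro h; exact ⟨ε a, h, by simp⟩
    · rintro ⟨b, hb, rfl⟩; simpa using hb
  rw [himg, Finset.card_image_of_injective _ ε.symm.injective]

/-- Weight decomposes as a sum over blocks. -/
lemma gcWt_eq_sum_blocks (x : Fin (∑ _ : Fin α, m) → G) :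
    gcWt x = ∑ i, gcWt (gcComp i x) := by
  rw [gcWt_def]
  rw [← card_filter_equiv (gcIdxEquiv m α) (fun k => x k ≠ 1)]
  rw [Finset.card_filter]
  rw [Fintype.sum_prod_type]
  congr 1
  funext i
  rw [gcWt_def, Finset.card_filter]
  rfl

lemma gcWt_autGC {D : Subgroup (Fin m → G)} (f : ↥(AutGC D)) (y : Fin m → G) :
    gcWt ((f : MulAut (Fin m → G)) y) = gcWt y := by
  have h := f.2.1 y 1
  rwa [map_one] at h

lemma gcWt_ext (i : Fin α) (y : Fin m → G) : gcWt (gcExt i y) = gcWt y := by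
  rw [gcWt_eq_sum_blocks]
  rw [Finset.sum_eq_single i]
  · rw [gcComp_ext, if_pos rfl]
  · intro i' _ hne
    rw [gcComp_ext, if_neg hne]
    simp [gcWt_def]
  · intro h
    exact absurd (Finset.mem_univ i) h

lemma gcComp_mul (i : Fin α) (x y : Fin (∑ _ : Fin α, m) → G) :
    gcComp i (x * y) = gcComp i x * gcComp i y := rfl

/-- The underlying function of the monomization of `(f, σ)`. -/
noncomputable def gcBfun {m α : ℕ} (D : Subgroup (Fin m → G)) (f : Fin α → ↥(AutGC D))
    (σ : Equiv.Perm (Fin α)) (x : Fin (∑ _ : Fin α, m) → G) : Fin (∑ _ : Fin α, m) → G :=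
  fun k => ((f ((gcIdxEquiv m α).symm k).1 : MulAut (Fin m → G)))
    (gcComp (σ⁻¹ ((gcIdxEquiv m α).symm k).1) x) ((gcIdxEquiv m α).symm k).2

lemma gcComp_gcBfun (D : Subgroup (Fin m → G)) (f : Fin α → ↥(AutGC D))
    (σ : Equiv.Perm (Fin α)) (x : Fin (∑ _ : Fin α, m) → G) (i : Fin α) :
    gcComp i (gcBfun D f σ x)
      = (f i : MulAut (Fin m → G)) (gcComp (σ⁻¹ i) x) := by
  funext j
  show gcBfun D f σ x (gcIdxEquiv m α (i, j)) = _
  rw [gcBfun, Equiv.symm_apply_apply]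

lemma gcBfun_mul (D : Subgroup (Fin m → G)) (f : Fin α → ↥(AutGC D))
    (σ : Equiv.Perm (Fin α)) (x y : Fin (∑ _ : Fin α, m) → G) :
    gcBfun D f σ (x * y) = gcBfun D f σ x * gcBfun D f σ y := by
  funext k
  rw [gcBfun, gcComp_mul, map_mul]
  rfl

lemma gcBfun_comp (D : Subgroup (Fin m → G)) (f g : Fin α → ↥(AutGC D))
    (σ τ : Equiv.Perm (Fin α)) (x : Fin (∑ _ : Fin α, m) → G) :
    gcBfun D f σ (gcBfun D g τ x)
      = gcBfun D (f * (permActionHom ↥(AutGC D) α σ) g) (σ * τ) x := by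
  funext k
  have h := gcComp_gcBfun D g τ x (σ⁻¹ (((gcIdxEquiv m α).symm k).1))
  show ((f (((gcIdxEquiv m α).symm k).1) : MulAut (Fin m → G)))
      (gcComp (σ⁻¹ (((gcIdxEquiv m α).symm k).1)) (gcBfun D g τ x)) (((gcIdxEquiv m α).symm k).2)
    = gcBfun D (f * (permActionHom ↥(AutGC D) α σ) g) (σ * τ) x k
  rw [h]
  rfl

lemma gcBfun_inv (D : Subgroup (Fin m → G)) (f : Fin α → ↥(AutGC D))
    (σ : Equiv.Perm (Fin α)) (x : Fin (∑ _ : Fin α, m) → G) :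
    gcBfun D f σ x⁻¹ = (gcBfun D f σ x)⁻¹ := by
  funext k
  rw [gcBfun]
  rw [show gcComp (σ⁻¹ (((gcIdxEquiv m α).symm k).1)) x⁻¹
    = (gcComp (σ⁻¹ (((gcIdxEquiv m α).symm k).1)) x)⁻¹ from rfl, map_inv]
  rfl

lemma gcBfun_one (D : Subgroup (Fin m → G)) (x : Fin (∑ _ : Fin α, m) → G) :
    gcBfun D 1 1 x = x := by
  funext k
  rw [gcBfun]
  show gcComp _ x _ = x k
  rw [gcComp]
  show x (gcIdxEquiv m α (((gcIdxEquiv m α).symm k).1, ((gcIdxEquiv m α).symm k).2)) = x k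
  rw [← Prod.mk.eta (p := (gcIdxEquiv m α).symm k), Equiv.apply_symm_apply]

/-- The homomorphism from the semidirect product into `MulAut`. -/
noncomputable def gcB (D : Subgroup (Fin m → G)) (α : ℕ) :
    ((Fin α → ↥(AutGC D)) ⋊[permActionHom ↥(AutGC D) α] Equiv.Perm (Fin α)) →*
      MulAut (Fin (∑ _ : Fin α, m) → G) where
  toFun p :=
    { toFun := gcBfun D p.left p.right
      invFun := gcBfun D (p⁻¹).left (p⁻¹).right
      left_inv := fun x => by
        rw [gcBfun_comp]
        have h1 : ((p⁻¹).left * (permActionHom ↥(AutGC D) α (p⁻¹).right) p.left)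
            = (p⁻¹ * p).left := (SemidirectProduct.mul_left _ _).symm
        have h2 : ((p⁻¹).right * p.right) = (p⁻¹ * p).right :=
          (SemidirectProduct.mul_right _ _).symm
        rw [h1, h2, inv_mul_cancel]
        rw [SemidirectProduct.one_left, SemidirectProduct.one_right, gcBfun_one]
      right_inv := fun x => by
        rw [gcBfun_comp]
        have h1 : (p.left * (permActionHom ↥(AutGC D) α p.right) (p⁻¹).left)
            = (p * p⁻¹).left := (SemidirectProduct.mul_left _ _).symm
        have h2 : (p.right * (p⁻¹).right) = (p * p⁻¹).right :=
          (SemidirectProduct.mul_right _ _).symm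
        rw [h1, h2, mul_inv_cancel]
        rw [SemidirectProduct.one_left, SemidirectProduct.one_right, gcBfun_one]
      map_mul' := gcBfun_mul D p.left p.right }
  map_one' := by
    ext x k
    show gcBfun D
      ((1 : (Fin α → ↥(AutGC D)) ⋊[permActionHom ↥(AutGC D) α] Equiv.Perm (Fin α))).left
      ((1 : (Fin α → ↥(AutGC D)) ⋊[permActionHom ↥(AutGC D) α] Equiv.Perm (Fin α))).right
      x k = x k
    rw [SemidirectProduct.one_left, SemidirectProduct.one_right]
    exact congrFun (gcBfun_one D x) k
  map_mul' p q := by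
    ext x k
    show gcBfun D (p * q).left (p * q).right x k
      = gcBfun D p.left p.right (gcBfun D q.left q.right x) k
    rw [gcBfun_comp, SemidirectProduct.mul_left, SemidirectProduct.mul_right]

lemma gcB_mem (D : Subgroup (Fin m → G)) (p) : gcB D α p ∈ AutGC (gcPow D α) := by
  constructor
  · -- isometry
    intro x y
    have hw : ∀ x, gcWt (gcBfun D p.left p.right x) = gcWt x := by
      intro x
      rw [gcWt_eq_sum_blocks, gcWt_eq_sum_blocks x]
      rw [← Equiv.sum_comp (p.right)⁻¹ (fun i => gcWt (gcComp i x))]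
      congr 1
      funext i
      rw [gcComp_gcBfun, gcWt_autGC]
    show hammingDist (gcBfun D p.left p.right x) (gcBfun D p.left p.right y) = _
    rw [hammingDist_eq_gcWt, hammingDist_eq_gcWt x y]
    rw [← gcBfun_inv, ← gcBfun_mul, hw]
  · -- membership
    intro x
    show gcBfun D p.left p.right x ∈ gcPow D α ↔ _
    rw [mem_gcPow_iff', mem_gcPow_iff']
    constructor
    · intro h i
      have := h (p.right i)
      rw [gcComp_gcBfun] at this
      have h2 := ((p.left (p.right i)).2.2 (gcComp ((p.right)⁻¹ (p.right i)) x)).mp this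
      rwa [Equiv.Perm.inv_def, Equiv.symm_apply_apply] at h2
    · intro h i
      rw [gcComp_gcBfun]
      exact ((p.left i).2.2 _).mpr (h _)

end GCB
section GCFinal

set_option linter.unusedSectionVars false
set_option maxHeartbeats 1000000

open Finset

variable {G : Type*} [Group G] [DecidableEq G] {m α : ℕ}

lemma gc_noncommProd_eq_single {M : Type*} [Monoid M] {ι : Type*} [Fintype ι] [DecidableEq ι]
    (g : ι → M) (comm) (c : ι) (h : ∀ i, i ≠ c → g i = 1) :
    Finset.univ.noncommProd g comm = g c := by
  have hins : (Finset.univ : Finset ι) = insert c (Finset.univ.erase c) :=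
    (Finset.insert_erase (Finset.mem_univ c)).symm
  refine (Finset.noncommProd_congr hins (fun x _ => rfl) comm).trans ?_
  refine (Finset.noncommProd_insert_of_notMem _ _ _ _ (Finset.notMem_erase c _)).trans ?_
  rw [Finset.noncommProd_eq_pow_card _ _ _ 1
    (fun i hi => h i (Finset.mem_erase.mp hi).1), one_pow, mul_one]

lemma gcExt_one (i : Fin α) : gcExt i (1 : Fin m → G) = 1 := by
  funext k
  rw [gcExt]
  by_cases h : ((gcIdxEquiv m α).symm k).1 = i <;> simp [h]

lemma gcExt_commute {i j : Fin α} (hij : i ≠ j) (y z : Fin m → G) :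
    Commute (gcExt i y) (gcExt j z) := by
  show gcExt i y * gcExt j z = gcExt j z * gcExt i y
  funext k
  show gcExt i y k * gcExt j z k = gcExt j z k * gcExt i y k
  rw [gcExt, gcExt]
  by_cases h1 : ((gcIdxEquiv m α).symm k).1 = i
  · have h2 : ¬ ((gcIdxEquiv m α).symm k).1 = j := by rw [h1]; exact hij
    simp [h1, h2, hij]
  · simp [h1]

/-- Block decomposition of a vector. -/
lemma gc_blockDecomp (x : Fin (∑ _ : Fin α, m) → G) :
    x = Finset.univ.noncommProd (fun i => gcExt i (gcComp i x))
      (fun i _ j _ hij => gcExt_commute hij _ _) := by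
  funext k
  have e2 := Finset.map_noncommProd Finset.univ (fun i => gcExt i (gcComp i x))
    (fun i _ j _ hij => gcExt_commute hij _ _)
    (Pi.evalMonoidHom (fun _ : Fin (∑ _ : Fin α, m) => G) k)
  rw [show Finset.univ.noncommProd (fun i => gcExt i (gcComp i x))
      (fun i _ j _ hij => gcExt_commute hij _ _) k
    = (Pi.evalMonoidHom (fun _ : Fin (∑ _ : Fin α, m) => G) k)
      (Finset.univ.noncommProd (fun i => gcExt i (gcComp i x))
        (fun i _ j _ hij => gcExt_commute hij _ _)) from rfl, e2]
  refine Eq.trans ?_ (gc_noncommProd_eq_single _ _ ((gcIdxEquiv m α).symm k).1 ?_).symm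
  · show x k = gcExt _ (gcComp _ x) k
    rw [gcExt, if_pos rfl, gcComp]
    congr 1
    rw [← Prod.mk.eta (p := (gcIdxEquiv m α).symm k), Equiv.apply_symm_apply]
  · intro i hi
    show gcExt i (gcComp i x) k = 1
    rw [gcExt, if_neg (fun hc => hi hc.symm)]

lemma gcB_injective [Nontrivial G] (D : Subgroup (Fin m → G)) (hm : 0 < m) :
    Function.Injective (gcB D α) := by
  apply (injective_iff_map_eq_one (gcB D α)).mpr
  intro p hp
  obtain ⟨g₀, hg₀⟩ : ∃ g : G, g ≠ 1 := exists_ne 1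
  have happ : ∀ x, gcBfun D p.left p.right x = x := by
    intro x
    have : (gcB D α p) x = (1 : MulAut (Fin (∑ _ : Fin α, m) → G)) x := by rw [hp]
    exact this
  have hcomp : ∀ (x : Fin (∑ _ : Fin α, m) → G) (i' : Fin α),
      (p.left i' : MulAut (Fin m → G)) (gcComp ((p.right)⁻¹ i') x) = gcComp i' x := by
    intro x i'
    rw [← gcComp_gcBfun, happ]
  have hσ : p.right = 1 := by
    apply Equiv.ext
    intro i
    rw [Equiv.Perm.one_apply]
    by_contra hne
    have h1 := hcomp (gcExt i (fun _ => g₀)) (p.right i)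
    rw [Equiv.Perm.inv_def, Equiv.symm_apply_apply, gcComp_ext, if_pos rfl, gcComp_ext,
      if_neg hne] at h1
    have h2 : (fun _ => g₀ : Fin m → G) = 1 := by
      have := (p.left (p.right i) : MulAut (Fin m → G)).injective
        (h1.trans (map_one (p.left (p.right i) : MulAut (Fin m → G))).symm)
      exact this
    exact hg₀ (congrFun h2 ⟨0, hm⟩)
  have hf : p.left = 1 := by
    funext i
    have : ∀ y : Fin m → G, (p.left i : MulAut (Fin m → G)) y = y := by
      intro y
      have h1 := hcomp (gcExt i y) i
      rw [hσ] at h1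
      simpa [gcComp_ext] using h1
    apply Subtype.ext
    exact MulEquiv.ext this
  exact SemidirectProduct.ext hf hσ

lemma gcB_surjective [Nontrivial G] [Fintype G] {D : Subgroup (Fin m → G)} (hm : 0 < m)
    (hind : ¬ GCDecomposable D) (φ : MulAut (Fin (∑ _ : Fin α, m) → G))
    (hφ : φ ∈ AutGC (gcPow D α)) : ∃ p, gcB D α p = φ := by
  classical
  obtain ⟨hiso, hmem⟩ := hφ
  obtain ⟨π, hπ⟩ := gc_monomial φ hiso
  have hTsplit : ∀ i, GCSplits (gcPow D α) ((gcBlock m α i).image π) :=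
    fun i => gcSplits_image φ hmem π hπ (gcSplits_block D i)
  -- the block permutation
  have hchoice : ∀ i : Fin α, ∃ i', (gcBlock m α i).image π = gcBlock m α i' := by
    intro i
    set k₀ := π (gcIdxEquiv m α (i, ⟨0, hm⟩)) with hk₀def
    have hk₀ : k₀ ∈ (gcBlock m α i).image π := by
      rw [Finset.mem_image]
      exact ⟨gcIdxEquiv m α (i, ⟨0, hm⟩), mem_gcBlock.2 (by rw [Equiv.symm_apply_apply]), rfl⟩
    set i' := ((gcIdxEquiv m α).symm k₀).1 with hi'def
    have hk₀' : k₀ ∈ gcBlock m α i' := mem_gcBlock.2 rfl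
    refine ⟨i', ?_⟩
    rcases gcSplits_block_trivial hind (Finset.inter_subset_right
        (s₁ := (gcBlock m α i).image π))
        ((hTsplit i).inter (gcSplits_block D i')) with h | h
    · exfalso
      have : k₀ ∈ (gcBlock m α i).image π ∩ gcBlock m α i' := Finset.mem_inter.2 ⟨hk₀, hk₀'⟩
      rw [h] at this
      exact Finset.notMem_empty _ this
    · have hsub : gcBlock m α i' ⊆ (gcBlock m α i).image π := by
        rw [← h]
        exact Finset.inter_subset_left
      have hcard : #((gcBlock m α i).image π) ≤ #(gcBlock m α i') := by
        rw [Finset.card_image_of_injective _ π.injective, card_gcBlock, card_gcBlock]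
      exact (Finset.eq_of_subset_of_card_le hsub hcard).symm
  choose σ₀ hσ₀ using hchoice
  have hσinj : Function.Injective σ₀ := by
    intro i₁ i₂ h
    have h1 : π (gcIdxEquiv m α (i₁, ⟨0, hm⟩)) ∈ (gcBlock m α i₁).image π := by
      rw [Finset.mem_image]
      exact ⟨_, mem_gcBlock.2 (by rw [Equiv.symm_apply_apply]), rfl⟩
    rw [hσ₀ i₁, h, ← hσ₀ i₂, Finset.mem_image] at h1
    obtain ⟨a, ha, hak⟩ := h1
    have : a = gcIdxEquiv m α (i₁, ⟨0, hm⟩) := π.injective hak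
    rw [this, mem_gcBlock, Equiv.symm_apply_apply] at ha
    exact ha
  let σ : Equiv.Perm (Fin α) := Equiv.ofBijective σ₀ (Finite.injective_iff_bijective.mp hσinj)
  have hσcoe : ∀ i, σ i = σ₀ i := fun _ => rfl
  -- support transport
  have hblock : ∀ (i : Fin α) (y : Fin m → G),
      gcSupp (φ (gcExt i y)) ⊆ gcBlock m α (σ₀ i) := by
    intro i y
    rw [hπ, ← hσ₀ i]
    exact Finset.image_subset_image (gcSupp_ext i y)
  -- the per-block automorphisms
  have hFdef : ∀ i : Fin α, ∃ F : (Fin m → G) →* (Fin m → G),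
      (∀ y, F y = gcComp i (φ (gcExt (σ.symm i) y))) := by
    intro i
    refine ⟨MonoidHom.mk' (fun y => gcComp i (φ (gcExt (σ.symm i) y))) ?_, fun y => rfl⟩
    intro y z
    show gcComp i (φ (gcExt (σ.symm i) (y * z)))
      = gcComp i (φ (gcExt (σ.symm i) y)) * gcComp i (φ (gcExt (σ.symm i) z))
    rw [gcExt_mul, map_mul]
    rfl
  choose F hF using hFdef
  have key1 : ∀ (i : Fin α) (y : Fin m → G), gcExt i (F i y) = φ (gcExt (σ.symm i) y) := by
    intro i y
    have hσi : σ₀ (σ.symm i) = i := by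
      rw [← hσcoe]
      exact σ.apply_symm_apply i
    funext k
    rw [gcExt]
    by_cases h : ((gcIdxEquiv m α).symm k).1 = i
    · rw [if_pos h, hF]
      rw [gcComp]
      congr 1
      rw [← h, ← Prod.mk.eta (p := (gcIdxEquiv m α).symm k), Equiv.apply_symm_apply]
    · rw [if_neg h]
      by_contra hc
      have : k ∈ gcSupp (φ (gcExt (σ.symm i) y)) := mem_gcSupp.2 (fun h' => hc h'.symm)
      have := hblock (σ.symm i) y this
      rw [hσi, mem_gcBlock] at this
      exact h this
  have hFinj : ∀ i, Function.Injective (F i) := by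
    intro i
    rw [injective_iff_map_eq_one]
    intro y hy
    have h1 : gcExt i (F i y) = 1 := by rw [hy, gcExt_one]
    rw [key1] at h1
    have h2 : gcExt (σ.symm i) y = 1 := φ.injective (h1.trans (map_one φ).symm)
    have h3 := congrArg (gcComp (σ.symm i)) h2
    rw [gcComp_ext, if_pos rfl] at h3
    rw [h3]
    rfl
  let fMul : ∀ i : Fin α, MulAut (Fin m → G) := fun i =>
    MulEquiv.ofBijective (F i) (Finite.injective_iff_bijective.mp (hFinj i))
  have hfMul : ∀ i y, fMul i y = F i y := fun _ _ => rfl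
  have hwF : ∀ i y, gcWt (F i y) = gcWt y := by
    intro i y
    have h1 : gcWt (F i y) = gcWt (gcExt i (F i y)) := (gcWt_ext _ _).symm
    rw [h1, key1]
    have h2 : gcWt (φ (gcExt (σ.symm i) y)) = gcWt (gcExt (σ.symm i) y) := by
      have := hiso (gcExt (σ.symm i) y) 1
      rwa [map_one] at this
    rw [h2, gcWt_ext]
  have hfmem : ∀ i, fMul i ∈ AutGC D := by
    intro i
    constructor
    · intro y z
      show hammingDist (F i y) (F i z) = hammingDist y z
      exact isom_of_wt_preserving (F i) (hwF i) y z
    · intro y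
      show F i y ∈ D ↔ y ∈ D
      constructor
      · intro h
        have h1 : gcExt i (F i y) ∈ gcPow D α := gcExt_mem D h
        rw [key1] at h1
        have h2 : gcExt (σ.symm i) y ∈ gcPow D α := (hmem _).mp h1
        rw [mem_gcPow_iff'] at h2
        have h3 := h2 (σ.symm i)
        rwa [gcComp_ext, if_pos rfl] at h3
      · intro h
        have h1 : gcExt (σ.symm i) y ∈ gcPow D α := gcExt_mem D h
        have h2 : φ (gcExt (σ.symm i) y) ∈ gcPow D α := (hmem _).mpr h1
        rw [mem_gcPow_iff'] at h2
        have h3 := h2 i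
        rwa [← hF] at h3
  refine ⟨⟨fun i => ⟨fMul i, hfmem i⟩, σ⟩, ?_⟩
  apply MulEquiv.ext
  intro x
  show gcBfun D (fun i => ⟨fMul i, hfmem i⟩) σ x = φ x
  funext k
  set i := ((gcIdxEquiv m α).symm k).1 with hidef
  set j := ((gcIdxEquiv m α).symm k).2 with hjdef
  have hstep1 : gcBfun D (fun i => ⟨fMul i, hfmem i⟩) σ x k
      = φ (gcExt (σ.symm i) (gcComp (σ.symm i) x)) k := by
    show F i (gcComp (σ⁻¹ i) x) j = _
    rw [hF]
    show φ (gcExt (σ.symm i) (gcComp (σ⁻¹ i) x)) (gcIdxEquiv m α (i, j)) = _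
    rw [show (σ⁻¹ i) = σ.symm i from rfl]
    congr 1
    rw [hidef, hjdef, ← Prod.mk.eta (p := (gcIdxEquiv m α).symm k), Equiv.apply_symm_apply]
  rw [hstep1]
  -- now use the block decomposition of x
  have hx := gc_blockDecomp x
  have e1 := Finset.map_noncommProd Finset.univ (fun i' => gcExt i' (gcComp i' x))
    (fun i' _ j' _ hij => gcExt_commute hij _ _) φ
  have e2 := Finset.map_noncommProd Finset.univ (fun i' => φ (gcExt i' (gcComp i' x)))
    (fun i' _ j' _ hij => (gcExt_commute hij _ _).map φ)
    (Pi.evalMonoidHom (fun _ : Fin (∑ _ : Fin α, m) => G) k)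
  have hφxk : φ x k = Finset.univ.noncommProd (fun i' => φ (gcExt i' (gcComp i' x)) k)
      (fun i' _ j' _ hij => ((gcExt_commute hij _ _).map φ).map
        (Pi.evalMonoidHom (fun _ : Fin (∑ _ : Fin α, m) => G) k)) := by
    calc φ x k = φ (Finset.univ.noncommProd (fun i' => gcExt i' (gcComp i' x))
        (fun i' _ j' _ hij => gcExt_commute hij _ _)) k := by rw [← hx]
    _ = _ := (congrFun e1 k).trans e2
  rw [hφxk]
  refine (gc_noncommProd_eq_single (fun i' => φ (gcExt i' (gcComp i' x)) k) _ (σ.symm i) ?_).symm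
  intro i' hi'
  by_contra hc
  have hsupp : k ∈ gcSupp (φ (gcExt i' (gcComp i' x))) := mem_gcSupp.2 hc
  have := hblock i' _ hsupp
  rw [mem_gcBlock] at this
  apply hi'
  apply σ.injective
  rw [Equiv.apply_symm_apply, hσcoe, ← this]

end GCFinal
/-- If `D ⊆ G^m` is an indecomposable group code and `α ≥ 1`, then
`Aut_GC(D^α)` is isomorphic to the semidirect product `(Aut_GC(D))^α ⋊ S_α`,
where `S_α` permutes the coordinates. -/
theorem autGC_pow_eq_semidirect {G : Type*} [Group G] [Fintype G] [DecidableEq G]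
    {m : ℕ} (hm : 0 < m) (D : Subgroup (Fin m → G)) (hind : ¬ GCDecomposable D)
    (α : ℕ) (hα : 0 < α) :
    Nonempty (↥(AutGC (gcPow D α)) ≃*
      (Fin α → ↥(AutGC D)) ⋊[permActionHom ↥(AutGC D) α] Equiv.Perm (Fin α)) := by
  rcases subsingleton_or_nontrivial G with hsub | hnt
  · exfalso
    apply hind
    refine ⟨1, 1, ⊤, ⊤, one_pos, one_pos, fun _ => 1, fun _ => 1, ?_, ?_, ?_, ?_⟩
    · refine ⟨fun x y => Subsingleton.elim _ _, fun x _ => ?_, fun x y => ?_⟩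
      · rw [gcSum, Subgroup.mem_comap, Subgroup.mem_prod]
        exact ⟨Subgroup.mem_top _, Subgroup.mem_top _⟩
      · exact le_trans (le_of_eq (hammingDist_self _)) (Nat.zero_le _)
    · refine ⟨fun x y => Subsingleton.elim _ _, fun x _ => D.one_mem, fun x y => ?_⟩
      exact le_trans (le_of_eq (hammingDist_self _)) (Nat.zero_le _)
    · exact fun x => Subsingleton.elim _ _
    · exact fun x => Subsingleton.elim _ _
  · let B' : ((Fin α → ↥(AutGC D)) ⋊[permActionHom ↥(AutGC D) α] Equiv.Perm (Fin α)) →*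
        ↥(AutGC (gcPow D α)) :=
      (gcB D α).codRestrict (AutGC (gcPow D α)) (gcB_mem D)
    have hinj : Function.Injective B' := fun p q h =>
      gcB_injective D hm (congrArg Subtype.val h)
    have hsurj : Function.Surjective B' := by
      intro Φ
      obtain ⟨p, hp⟩ := gcB_surjective hm hind Φ.val Φ.2
      exact ⟨p, Subtype.ext hp⟩
    exact ⟨(MulEquiv.ofBijective B' ⟨hinj, hsurj⟩).symm⟩
end

section
/- Every nondegenerate constant weight group code C ⊆ G^n is indecomposable (as a group code). -/
section Codes
variable {A : Type*} [Fintype A] [DecidableEq A]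

/-- `φ` is a morphism of codes from `C ⊆ A^n` to `D ⊆ A^m`. -/
def IsCodeHom {n m : ℕ} (C : Set (Fin n → A)) (D : Set (Fin m → A))
    (φ : (Fin n → A) → (Fin m → A)) : Prop :=
  (∀ x ∈ C, φ x ∈ D) ∧ ∀ x y : Fin n → A, hammingDist (φ x) (φ y) ≤ hammingDist x y

/-- The codes `C` and `D` are isomorphic. -/
def CodeIso {n m : ℕ} (C : Set (Fin n → A)) (D : Set (Fin m → A)) : Prop :=
  ∃ (φ : (Fin n → A) → (Fin m → A)) (ψ : (Fin m → A) → (Fin n → A)),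
    IsCodeHom C D φ ∧ IsCodeHom D C ψ ∧
      Function.LeftInverse ψ φ ∧ Function.RightInverse ψ φ

/-- Direct sum of two codes. -/
def codeSum {n m : ℕ} (C : Set (Fin n → A)) (D : Set (Fin m → A)) :
    Set (Fin (n + m) → A) :=
  Set.image2 Fin.append C D

/-- A code is decomposable if it is isomorphic to a direct sum of two codes of positive length. -/
def CodeDecomposable {n : ℕ} (C : Set (Fin n → A)) : Prop :=
  ∃ (p q : ℕ) (D : Set (Fin p → A)) (E : Set (Fin q → A)),
    0 < p ∧ 0 < q ∧ D.Nonempty ∧ E.Nonempty ∧ CodeIso C (codeSum D E)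

/-- Minimum distance of a code. -/
noncomputable def minDist {n : ℕ} (C : Set (Fin n → A)) : ℕ :=
  sInf {d | ∃ x ∈ C, ∃ y ∈ C, x ≠ y ∧ hammingDist x y = d}

/-- `r` is a correcting radius for `C`: closed balls of radius `r` centered at distinct
codewords are pairwise disjoint. -/
def IsCorrectingRadius {n : ℕ} (C : Set (Fin n → A)) (r : ℕ) : Prop :=
  ∀ c₁ ∈ C, ∀ c₂ ∈ C, c₁ ≠ c₂ →
    ∀ x : Fin n → A, hammingDist x c₁ ≤ r → ¬ hammingDist x c₂ ≤ r

/-- `C` is perfect: every word is within some correcting radius of a codeword. -/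
def IsPerfectCode {n : ℕ} (C : Set (Fin n → A)) : Prop :=
  ∀ x : Fin n → A, ∃ r : ℕ, IsCorrectingRadius C r ∧ ∃ c ∈ C, hammingDist x c ≤ r

/-- `C` is trivial: isomorphic to a full code `A^m`. -/
def IsTrivialCode {n : ℕ} (C : Set (Fin n → A)) : Prop :=
  ∃ m : ℕ, CodeIso C (Set.univ : Set (Fin m → A))

/-- `C` is degenerate: isomorphic to `{x} ⊕ D` for some letter `x` and some code `D`. -/
def CodeDegenerate {n : ℕ} (C : Set (Fin n → A)) : Prop :=
  ∃ (m : ℕ) (x : A) (D : Set (Fin m → A)),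
    D.Nonempty ∧ CodeIso C (codeSum ({fun _ => x} : Set (Fin 1 → A)) D)

end Codes
/-- A group code is degenerate if it is isomorphic (as a code) to `{x} ⊕ D` for some
`x ∈ G` and some group code `D` of one shorter length. -/
def GCDegenerate {G : Type*} [Group G] [Fintype G] [DecidableEq G] {n : ℕ}
    (C : Subgroup (Fin n → G)) : Prop :=
  ∃ (m : ℕ) (x : G) (D : Subgroup (Fin m → G)),
    CodeIso (C : Set (Fin n → G))
      (codeSum ({fun _ => x} : Set (Fin 1 → G)) (D : Set (Fin m → G)))

section MyAux
variable {A : Type*} [DecidableEq A]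

private lemma myHdCompEquiv {a b : ℕ} (e : Fin a ≃ Fin b) (x y : Fin b → A) :
    hammingDist (x ∘ e) (y ∘ e) = hammingDist x y := by
  simp only [hammingDist]
  apply Finset.card_bij' (fun i _ => e i) (fun j _ => e.symm j) <;> simp

private lemma myHdAppend {p q : ℕ} (a a' : Fin p → A) (b b' : Fin q → A) :
    hammingDist (Fin.append a b) (Fin.append a' b') = hammingDist a a' + hammingDist b b' := by
  simp only [hammingDist, Finset.card_filter, Fin.sum_univ_add, Fin.append_left, Fin.append_right]

private lemma myOneAppendOne {G : Type*} [One G] (p q : ℕ) :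
    (1 : Fin (p+q) → G) = Fin.append (1 : Fin p → G) (1 : Fin q → G) := by
  funext i
  refine Fin.addCases (fun i => ?_) (fun i => ?_) i <;>
    simp [Fin.append_left, Fin.append_right]

end MyAux

section MyAux2
variable {G : Type*} [Group G] [DecidableEq G]

private lemma myMemGcSum {p q : ℕ} {D : Subgroup (Fin p → G)} {E : Subgroup (Fin q → G)}
    {z : Fin (p+q) → G} :
    z ∈ gcSum D E ↔
      (fun i => z (Fin.castAdd q i)) ∈ D ∧ (fun j => z (Fin.natAdd p j)) ∈ E :=
  Iff.rfl

private lemma myAppendMemGcSum {p q : ℕ} {D : Subgroup (Fin p → G)} {E : Subgroup (Fin q → G)}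
    {d : Fin p → G} {e : Fin q → G} (hd : d ∈ D) (he : e ∈ E) :
    Fin.append d e ∈ gcSum D E := by
  rw [myMemGcSum]
  constructor
  · have h : (fun i => Fin.append d e (Fin.castAdd q i)) = d :=
      funext fun i => Fin.append_left d e i
    rw [h]; exact hd
  · have h : (fun j => Fin.append d e (Fin.natAdd p j)) = e :=
      funext fun j => Fin.append_right d e j
    rw [h]; exact he

private lemma myAppendNeOneLeft {p q : ℕ} {d : Fin p → G} {e : Fin q → G} (hd : d ≠ 1) :
    Fin.append d e ≠ (1 : Fin (p+q) → G) := by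
  intro h
  apply hd
  funext i
  have := congrFun h (Fin.castAdd q i)
  rwa [Fin.append_left] at this

private lemma myAppendNeOneRight {p q : ℕ} {d : Fin p → G} {e : Fin q → G} (he : e ≠ 1) :
    Fin.append d e ≠ (1 : Fin (p+q) → G) := by
  intro h
  apply he
  funext j
  have := congrFun h (Fin.natAdd p j)
  rwa [Fin.append_right] at this

/-- The coordinate bijection moving coordinate `i₀` of `Fin (k+1)` to the front. -/
private def myMoveEquiv {k : ℕ} (i₀ : Fin (k+1)) : Fin (1 + k) ≃ Fin (k + 1) where
  toFun := Fin.append (fun _ => i₀) i₀.succAbove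
  invFun := Fin.insertNth i₀ (Fin.castAdd k 0) (fun j => Fin.natAdd 1 j)
  left_inv := by
    intro x
    refine Fin.addCases (fun j => ?_) (fun j => ?_) x
    · rw [Fin.append_left, Fin.insertNth_apply_same]
      congr 1
      exact Subsingleton.elim _ _
    · rw [Fin.append_right, Fin.insertNth_apply_succAbove]
  right_inv := by
    intro i
    rcases eq_or_ne i i₀ with rfl | hne
    · rw [Fin.insertNth_apply_same, Fin.append_left]
    · obtain ⟨j, rfl⟩ := Fin.exists_succAbove_eq hne
      rw [Fin.insertNth_apply_succAbove, Fin.append_right]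

private def myDropHom {k : ℕ} (i₀ : Fin (k+1)) : (Fin (k+1) → G) →* (Fin k → G) where
  toFun z := z ∘ i₀.succAbove
  map_one' := rfl
  map_mul' _ _ := rfl

private lemma myMoveEquiv_castAdd {k : ℕ} (i₀ : Fin (k+1)) (j : Fin 1) :
    myMoveEquiv i₀ (Fin.castAdd k j) = i₀ := by
  simp only [myMoveEquiv, Equiv.coe_fn_mk]
  exact Fin.append_left _ _ _

private lemma myMoveEquiv_natAdd {k : ℕ} (i₀ : Fin (k+1)) (j : Fin k) :
    myMoveEquiv i₀ (Fin.natAdd 1 j) = i₀.succAbove j := by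
  simp only [myMoveEquiv, Equiv.coe_fn_mk]
  exact Fin.append_right _ _ _

private lemma myMoveEquiv_symm_same {k : ℕ} (i₀ : Fin (k+1)) :
    (myMoveEquiv i₀).symm i₀ = Fin.castAdd k 0 := by
  simp only [myMoveEquiv, Equiv.coe_fn_symm_mk]
  exact Fin.insertNth_apply_same i₀ _ _

private lemma myMoveEquiv_symm_succAbove {k : ℕ} (i₀ : Fin (k+1)) (j : Fin k) :
    (myMoveEquiv i₀).symm (i₀.succAbove j) = Fin.natAdd 1 j := by
  simp only [myMoveEquiv, Equiv.coe_fn_symm_mk]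
  exact Fin.insertNth_apply_succAbove i₀ _ _ _

private lemma myDegenerateOfTrivialCoord [Fintype G] {m : ℕ} (X : Subgroup (Fin m → G))
    (i₀ : Fin m) (h1 : ∀ z ∈ X, z i₀ = 1) :
    ∃ (k : ℕ) (D : Subgroup (Fin k → G)),
      CodeIso (X : Set (Fin m → G))
        (codeSum ({fun _ => (1:G)} : Set (Fin 1 → G)) (D : Set (Fin k → G))) := by
  obtain ⟨k, rfl⟩ : ∃ k, m = k + 1 := ⟨m - 1, (Nat.succ_pred_eq_of_pos i₀.pos).symm⟩
  refine ⟨k, X.map (myDropHom i₀), fun z j => z (myMoveEquiv i₀ j),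
    fun w i => w ((myMoveEquiv i₀).symm i), ⟨?_, ?_⟩, ⟨?_, ?_⟩, ?_, ?_⟩
  · intro z hz
    refine Set.mem_image2.mpr ⟨fun _ => 1, rfl, z ∘ i₀.succAbove, ⟨z, hz, rfl⟩, ?_⟩
    funext j
    refine Fin.addCases (fun j => ?_) (fun j => ?_) j
    · simp only [Fin.append_left, myMoveEquiv_castAdd, h1 z hz]
    · simp only [Fin.append_right, myMoveEquiv_natAdd]
      rfl
  · intro x y
    exact (myHdCompEquiv (myMoveEquiv i₀) x y).le
  · intro w hw
    obtain ⟨u, hu, v, hv, rfl⟩ := Set.mem_image2.mp hw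
    obtain ⟨z₀, hz₀, rfl⟩ := hv
    have hu' : u = fun _ => 1 := hu
    have heq : (fun i => Fin.append u (myDropHom i₀ z₀) ((myMoveEquiv i₀).symm i)) = z₀ := by
      funext i
      rcases eq_or_ne i i₀ with heq' | hne
      · simp only [heq', myMoveEquiv_symm_same, Fin.append_left, hu', h1 z₀ hz₀]
      · obtain ⟨j, rfl⟩ := Fin.exists_succAbove_eq hne
        simp only [myMoveEquiv_symm_succAbove, Fin.append_right]
        rfl
    show (fun i => Fin.append u (myDropHom i₀ z₀) ((myMoveEquiv i₀).symm i)) ∈ (X : Set _)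
    rw [heq]
    exact hz₀
  · intro x y
    exact (myHdCompEquiv (myMoveEquiv i₀).symm x y).le
  · intro z
    funext i
    exact congrArg z ((myMoveEquiv i₀).apply_symm_apply i)
  · intro w
    funext j
    exact congrArg w ((myMoveEquiv i₀).symm_apply_apply j)

end MyAux2

/-- Every nondegenerate constant weight group code is indecomposable. -/
theorem constant_weight_nondegenerate_indecomposable
    {G : Type*} [Group G] [Fintype G] [DecidableEq G] {n : ℕ}
    (C : Subgroup (Fin n → G)) (r : ℕ) (hr : 0 < r) (hrn : r ≤ n)
    (hw : ∀ x ∈ C, x ≠ (1 : Fin n → G) → hammingDist x (1 : Fin n → G) = r)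
    (hnd : ¬ GCDegenerate C) : ¬ GCDecomposable C := by
  rintro ⟨p, q, D, E, hp, hq, φ, ψ, ⟨hφm, hφmem, hφd⟩, ⟨hψm, hψmem, hψd⟩, hlr, hrl⟩
  have hφ1 : φ 1 = 1 := by
    have h := (hφm 1 1).symm
    rw [mul_one] at h
    exact mul_eq_left.mp h
  have hψ1 : ψ 1 = 1 := by
    have h := (hψm 1 1).symm
    rw [mul_one] at h
    exact mul_eq_left.mp h
  -- every nonidentity element of the sum code has weight r
  have hdist : ∀ z ∈ gcSum D E, z ≠ 1 → hammingDist z (1 : Fin (p+q) → G) = r := by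
    intro z hz hz1
    have hψz : ψ z ∈ C := hψmem z hz
    have hψz1 : ψ z ≠ 1 := by
      intro h
      apply hz1
      rw [← hrl z, h, hφ1]
    have h1 : hammingDist (ψ z) (1 : Fin n → G) = r := hw _ hψz hψz1
    have le1 : hammingDist (ψ z) (ψ 1) ≤ hammingDist z 1 := hψd z 1
    rw [hψ1] at le1
    have le2 : hammingDist z (1 : Fin (p+q) → G) ≤ hammingDist (ψ z) 1 := by
      have h2 := hφd (ψ z) 1
      rwa [hrl z, hφ1] at h2
    omega
  -- one of the two summands must be trivial
  have key : (∀ d ∈ D, d = 1) ∨ (∀ e ∈ E, e = 1) := by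
    by_contra hcon
    push_neg at hcon
    obtain ⟨⟨d, hd, hd1⟩, ⟨e, he, he1⟩⟩ := hcon
    have w1 : hammingDist d (1 : Fin p → G) = r := by
      have := hdist (Fin.append d 1) (myAppendMemGcSum hd (one_mem E)) (myAppendNeOneLeft hd1)
      rwa [myOneAppendOne, myHdAppend, hammingDist_self, add_zero] at this
    have w2 : hammingDist e (1 : Fin q → G) = r := by
      have := hdist (Fin.append 1 e) (myAppendMemGcSum (one_mem D) he) (myAppendNeOneRight he1)
      rwa [myOneAppendOne, myHdAppend, hammingDist_self, zero_add] at this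
    have w3 : hammingDist d (1 : Fin p → G) + hammingDist e (1 : Fin q → G) = r := by
      have := hdist (Fin.append d e) (myAppendMemGcSum hd he) (myAppendNeOneLeft hd1)
      rwa [myOneAppendOne, myHdAppend] at this
    omega
  -- in either case there is a trivial coordinate, giving degeneracy
  have hcoord : ∃ i₀ : Fin (p + q), ∀ z ∈ gcSum D E, z i₀ = 1 := by
    rcases key with hD | hE
    · refine ⟨Fin.castAdd q ⟨0, hp⟩, fun z hz => ?_⟩
      have h := hD _ (myMemGcSum.mp hz).1
      exact congrFun h ⟨0, hp⟩
    · refine ⟨Fin.natAdd p ⟨0, hq⟩, fun z hz => ?_⟩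
      have h := hE _ (myMemGcSum.mp hz).2
      exact congrFun h ⟨0, hq⟩
  obtain ⟨i₀, h1⟩ := hcoord
  obtain ⟨k, D', φ', ψ', ⟨hφ'mem, hφ'd⟩, ⟨hψ'mem, hψ'd⟩, hlr', hrl'⟩ :=
    myDegenerateOfTrivialCoord (gcSum D E) i₀ h1
  apply hnd
  refine ⟨k, 1, D', φ' ∘ φ, ψ ∘ ψ',
    ⟨fun x hx => hφ'mem _ (hφmem x hx), fun x y => le_trans (hφ'd _ _) (hφd x y)⟩,
    ⟨fun x hx => hψmem _ (hψ'mem x hx), fun x y => le_trans (hψd _ _) (hψ'd x y)⟩,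
    fun x => ?_, fun w => ?_⟩
  · show ψ (ψ' (φ' (φ x))) = x
    rw [hlr' (φ x), hlr x]
  · show φ' (φ (ψ (ψ' w))) = w
    rw [hrl (ψ' w), hrl' w]
end

section
/- Let C ⊆ G^n be a cyclic group code with |C| ≥ 2, write |C| = p_1^{ξ_1} ⋯ p_s^{ξ_s} with p_1,…,p_s distinct primes and ξ_i ≥ 1, and let ξ = gcd(ξ_1,…,ξ_s). If gcd(ξ, n) = 1, then C is indecomposable as a group code. -/
section IndecompAux
open Finset
set_option linter.unusedSectionVars false
variable {G : Type*} [Group G] [DecidableEq G]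

/-- Restriction of a word to a set of coordinates (entries outside are `1`). -/
def mask {n : ℕ} (A : Finset (Fin n)) (x : Fin n → G) : Fin n → G :=
  fun i => if i ∈ A then x i else 1

lemma mask_apply_mem {n : ℕ} {A : Finset (Fin n)} (x : Fin n → G) {i : Fin n} (h : i ∈ A) :
    mask A x i = x i := if_pos h

lemma mask_apply_not_mem {n : ℕ} {A : Finset (Fin n)} (x : Fin n → G) {i : Fin n} (h : i ∉ A) :
    mask A x i = 1 := if_neg h

lemma mask_mul {n : ℕ} (A : Finset (Fin n)) (x y : Fin n → G) :
    mask A (x * y) = mask A x * mask A y := by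
  funext i; by_cases h : i ∈ A <;> simp [mask, h]

lemma mask_mask {n : ℕ} (A B : Finset (Fin n)) (x : Fin n → G) :
    mask A (mask B x) = mask (A ∩ B) x := by
  funext i
  by_cases h1 : i ∈ A <;> by_cases h2 : i ∈ B <;> simp [mask, h1, h2]

lemma mask_mul_compl {n : ℕ} (A : Finset (Fin n)) (x : Fin n → G) :
    mask A x * mask Aᶜ x = x := by
  funext i; by_cases h : i ∈ A <;> simp [mask, h]

lemma hammingDist_one_single_le {n : ℕ} (i : Fin n) (g : G) :
    hammingDist (Pi.mulSingle i g) (1 : Fin n → G) ≤ 1 := by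
  rw [hammingDist]
  refine le_trans (Finset.card_le_card (t := {i}) ?_) (le_of_eq (Finset.card_singleton i))
  intro j hj
  simp only [Finset.mem_filter] at hj
  rw [Finset.mem_singleton]
  by_contra hji
  exact hj.2 (by
    have h1 : (Pi.mulSingle i g : Fin n → G) j = 1 :=
      Pi.mulSingle_eq_of_ne (M := fun _ => G) hji g
    simpa using h1)

lemma eq_of_hamming_le_one {N : ℕ} {u : Fin N → G} (hu : hammingDist u 1 ≤ 1)
    {a b : Fin N} (ha : u a ≠ 1) (hb : u b ≠ 1) : a = b := by
  by_contra hab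
  rw [hammingDist] at hu
  have h2 : ({a, b} : Finset (Fin N)) ⊆ Finset.univ.filter fun i => u i ≠ (1 : Fin N → G) i := by
    intro x hx
    rcases Finset.mem_insert.mp hx with rfl | hx
    · simp only [Finset.mem_filter, Finset.mem_univ, true_and]; simpa using ha
    · obtain rfl := Finset.mem_singleton.mp hx
      simp only [Finset.mem_filter, Finset.mem_univ, true_and]; simpa using hb
  have h3 := Finset.card_le_card h2
  rw [Finset.card_pair hab] at h3
  omega

lemma support_control {n N : ℕ} (φ : (Fin n → G) → (Fin N → G))
    (hmul : ∀ x y, φ (x * y) = φ x * φ y)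
    (hdist : ∀ x y, hammingDist (φ x) (φ y) ≤ hammingDist x y)
    (hinj : Function.Injective φ) (g₀ : G) (hg₀ : g₀ ≠ 1) :
    ∃ τ : Fin n → Fin N, ∀ x j, φ x j ≠ 1 → ∃ i, τ i = j ∧ x i ≠ 1 := by
  have hone : φ 1 = 1 := map_one (MonoidHom.mk' φ hmul)
  have hwt : ∀ (i : Fin n) (g : G), hammingDist (φ (Pi.mulSingle i g)) 1 ≤ 1 := by
    intro i g
    refine le_trans ?_ (hammingDist_one_single_le i g)
    have h := hdist (Pi.mulSingle i g) 1
    rwa [hone] at h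
  have hex : ∀ i : Fin n, ∃ k, φ (Pi.mulSingle i g₀) k ≠ 1 := by
    intro i
    have hne : φ (Pi.mulSingle i g₀) ≠ 1 := by
      intro h
      rw [← hone] at h
      have h2 := hinj h
      have h3 := congrFun h2 i
      rw [Pi.mulSingle_eq_same] at h3
      exact hg₀ h3
    obtain ⟨k, hk⟩ := Function.ne_iff.mp hne
    exact ⟨k, hk⟩
  choose τ hτ using hex
  have Pτ : ∀ (i : Fin n) (g : G) (j : Fin N), j ≠ τ i → φ (Pi.mulSingle i g) j = 1 := by
    intro i g j hj
    by_contra hv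
    have h1 : φ (Pi.mulSingle i (g₀ * g)) = φ (Pi.mulSingle i g₀) * φ (Pi.mulSingle i g) := by
      rw [Pi.mulSingle_mul]; exact hmul _ _
    have hvτ : φ (Pi.mulSingle i g) (τ i) = 1 := by
      by_contra h; exact hj (eq_of_hamming_le_one (hwt i g) hv h)
    have huj : φ (Pi.mulSingle i g₀) j = 1 := by
      by_contra h; exact hj (eq_of_hamming_le_one (hwt i g₀) h (hτ i))
    have hwa : φ (Pi.mulSingle i (g₀ * g)) (τ i) ≠ 1 := by
      rw [h1, Pi.mul_apply, hvτ, mul_one]; exact hτ i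
    have hwb : φ (Pi.mulSingle i (g₀ * g)) j ≠ 1 := by
      rw [h1, Pi.mul_apply, huj, one_mul]; exact hv
    exact hj (eq_of_hamming_le_one (hwt i (g₀ * g)) hwb hwa)
  refine ⟨τ, ?_⟩
  have key : ∀ s : Finset (Fin n), ∀ x : Fin n → G, (∀ i, i ∉ s → x i = 1) →
      ∀ j, (∀ i, τ i = j → x i = 1) → φ x j = 1 := by
    intro s
    induction s using Finset.induction_on with
    | empty =>
      intro x hx j _
      have hx1 : x = 1 := funext fun i => hx i (Finset.notMem_empty i)
      rw [hx1, hone]; rfl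
    | @insert a s ha ih =>
      intro x hx j hj
      have hdecomp : x = Pi.mulSingle a (x a) * Function.update x a 1 := by
        funext i
        by_cases hia : i = a
        · subst hia
          simp [Pi.mulSingle_eq_same, Function.update_self]
        · simp [Pi.mulSingle_eq_of_ne (M := fun _ => G) hia, Function.update_of_ne hia]
      have hy : ∀ i, i ∉ s → Function.update x a 1 i = 1 := by
        intro i hi
        by_cases hia : i = a
        · subst hia; simp [Function.update_self]
        · rw [Function.update_of_ne hia]
          exact hx i (by simp [Finset.mem_insert, hia, hi])
      have hj' : ∀ i, τ i = j → Function.update x a 1 i = 1 := by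
        intro i hi
        by_cases hia : i = a
        · subst hia; simp [Function.update_self]
        · rw [Function.update_of_ne hia]; exact hj i hi
      have hsingle : φ (Pi.mulSingle a (x a)) j = 1 := by
        by_cases hja : j = τ a
        · have hxa : x a = 1 := hj a hja.symm
          rw [hxa]
          have h5 : (Pi.mulSingle a (1 : G) : Fin n → G) = 1 := Pi.mulSingle_one a
          rw [h5, hone]; rfl
        · exact Pτ a (x a) j hja
      calc φ x j = φ (Pi.mulSingle a (x a)) j * φ (Function.update x a 1) j := by
            rw [← Pi.mul_apply, ← hmul, ← hdecomp]
        _ = 1 := by rw [hsingle, ih _ hy j hj', one_mul]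
  intro x j h
  by_contra hc
  push_neg at hc
  exact h (key Finset.univ x (fun i hi => absurd (Finset.mem_univ i) hi) j hc)

lemma exists_split {n : ℕ} (C : Subgroup (Fin n → G)) (hdec : GCDecomposable C)
    (g₀ : G) (hg₀ : g₀ ≠ 1) :
    ∃ A : Finset (Fin n), A.Nonempty ∧ A ≠ Finset.univ ∧ ∀ c ∈ C, mask A c ∈ C := by
  obtain ⟨p', q', D, E, hp', hq', φ, ψ, hφ, hψ, hlr, hrl⟩ := hdec
  have hφinj : Function.Injective φ := hlr.injective
  have hψinj : Function.Injective ψ := hrl.injective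
  obtain ⟨τ, hτ⟩ := support_control φ hφ.1 hφ.2.2 hφinj g₀ hg₀
  obtain ⟨τ', hτ'⟩ := support_control ψ hψ.1 hψ.2.2 hψinj g₀ hg₀
  have hsingle_ne : ∀ {M : ℕ} (i : Fin M), (Pi.mulSingle i g₀ : Fin M → G) i ≠ 1 := by
    intro M i
    rw [Pi.mulSingle_eq_same]; exact hg₀
  have hττ' : ∀ k, τ (τ' k) = k := by
    intro k
    have hx : φ (ψ (Pi.mulSingle k g₀)) = Pi.mulSingle k g₀ := hrl _
    have h1 : φ (ψ (Pi.mulSingle k g₀)) k ≠ 1 := by rw [hx]; exact hsingle_ne k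
    obtain ⟨i, hi1, hi2⟩ := hτ _ _ h1
    obtain ⟨j, hj1, hj2⟩ := hτ' _ _ hi2
    have hjk : j = k := by
      by_contra hjk
      exact hj2 (Pi.mulSingle_eq_of_ne (M := fun _ => G) hjk g₀)
    rw [show τ' k = i from hjk ▸ hj1]
    exact hi1
  have hτ'τ : ∀ i, τ' (τ i) = i := by
    intro i
    have hx : ψ (φ (Pi.mulSingle i g₀)) = Pi.mulSingle i g₀ := hlr _
    have h1 : ψ (φ (Pi.mulSingle i g₀)) i ≠ 1 := by rw [hx]; exact hsingle_ne i
    obtain ⟨j, hj1, hj2⟩ := hτ' _ _ h1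
    obtain ⟨i', hi1, hi2⟩ := hτ _ _ hj2
    have hii : i' = i := by
      by_contra hii
      exact hi2 (Pi.mulSingle_eq_of_ne (M := fun _ => G) hii g₀)
    rw [show τ i = j from hii ▸ hi1]
    exact hj1
  set A : Finset (Fin n) := Finset.univ.filter (fun i => (τ i : ℕ) < p') with hA
  have hmemA : ∀ i, i ∈ A ↔ (τ i : ℕ) < p' := by
    intro i; rw [hA, Finset.mem_filter]; simp
  refine ⟨A, ?_, ?_, ?_⟩
  · refine ⟨τ' ⟨0, by omega⟩, ?_⟩
    rw [hmemA, hττ']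
    exact hp'
  · intro h
    have h1 : τ' ⟨p', by omega⟩ ∈ A := h ▸ Finset.mem_univ _
    rw [hmemA, hττ'] at h1
    simp at h1
  · intro c hc
    have hzc : φ c ∈ gcSum D E := hφ.2.1 c hc
    set P : Finset (Fin (p' + q')) := Finset.univ.filter (fun k => (k : ℕ) < p') with hP
    have hmemP : ∀ k, k ∈ P ↔ (k : ℕ) < p' := by
      intro k; rw [hP, Finset.mem_filter]; simp
    have hmem : ∀ z : Fin (p' + q') → G, z ∈ gcSum D E ↔
        (fun i => z (Fin.castAdd q' i)) ∈ D ∧ (fun j => z (Fin.natAdd p' j)) ∈ E := by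
      intro z
      rw [gcSum, Subgroup.mem_comap, Subgroup.mem_prod]
      exact Iff.rfl
    have hw : mask P (φ c) ∈ gcSum D E := by
      rw [hmem]
      constructor
      · have heq : (fun i => mask P (φ c) (Fin.castAdd q' i))
            = fun i => φ c (Fin.castAdd q' i) := by
          funext i
          exact mask_apply_mem _ ((hmemP _).mpr (by simp [Fin.coe_castAdd, i.isLt]))
        rw [heq]
        exact ((hmem (φ c)).mp hzc).1
      · have heq : (fun j => mask P (φ c) (Fin.natAdd p' j)) = (1 : Fin q' → G) := by
          funext j
          exact mask_apply_not_mem _ (by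
            rw [hmemP]
            simp [Fin.coe_natAdd])
        rw [heq]
        exact E.one_mem
    have hψw : ψ (mask P (φ c)) ∈ C := hψ.2.1 _ hw
    have key : ψ (mask P (φ c)) = mask A c := by
      apply hφinj
      rw [hrl _]
      funext k
      by_cases hk : k ∈ P
      · rw [mask_apply_mem _ hk]
        have h2 : φ c k = φ (mask A c) k * φ (mask Aᶜ c) k := by
          conv_lhs => rw [← mask_mul_compl A c]
          rw [hφ.1, Pi.mul_apply]
        have h3 : φ (mask Aᶜ c) k = 1 := by
          by_contra h
          obtain ⟨i, hi1, hi2⟩ := hτ _ _ h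
          have hiA : i ∈ Aᶜ := by
            by_contra hiA
            exact hi2 (mask_apply_not_mem _ hiA)
          rw [Finset.mem_compl, hmemA] at hiA
          rw [hi1] at hiA
          exact hiA ((hmemP k).mp hk)
        rw [h2, h3, mul_one]
      · rw [mask_apply_not_mem _ hk]
        by_contra h
        obtain ⟨i, hi1, hi2⟩ := hτ _ _ (Ne.symm h)
        have hiA : i ∈ A := by
          by_contra hiA
          exact hi2 (mask_apply_not_mem _ hiA)
        rw [hmemA, hi1] at hiA
        exact hk ((hmemP k).mpr hiA)
    rw [← key]
    exact hψw

/-- The image of a coordinate set under the `k`-th power of a permutation. -/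
def rotSet {n : ℕ} (σ : Equiv.Perm (Fin n)) (B : Finset (Fin n)) (k : ℕ) : Finset (Fin n) :=
  B.map ((σ ^ k).toEmbedding)

lemma mem_rotSet {n : ℕ} {σ : Equiv.Perm (Fin n)} {B : Finset (Fin n)} {k : ℕ} {i : Fin n} :
    i ∈ rotSet σ B k ↔ (σ ^ k)⁻¹ i ∈ B := by
  rw [rotSet, Finset.mem_map_equiv]
  exact Iff.rfl

lemma rotSet_zero {n : ℕ} (σ : Equiv.Perm (Fin n)) (B : Finset (Fin n)) :
    rotSet σ B 0 = B := by
  ext i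
  rw [mem_rotSet, pow_zero, inv_one]
  simp

lemma rotSet_add {n : ℕ} (σ : Equiv.Perm (Fin n)) (B : Finset (Fin n)) (a b : ℕ) :
    rotSet σ B (a + b) = rotSet σ (rotSet σ B a) b := by
  ext i
  rw [mem_rotSet, mem_rotSet, mem_rotSet]
  have h : (σ ^ (a + b))⁻¹ i = (σ ^ a)⁻¹ ((σ ^ b)⁻¹ i) := by
    rw [show σ ^ (a + b) = σ ^ b * σ ^ a from by rw [← pow_add, Nat.add_comm],
        mul_inv_rev, Equiv.Perm.mul_apply]
  rw [h]

open Fin.NatCast in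
lemma finRotate_pow_apply {m : ℕ} : ∀ (k : ℕ) (i : Fin (m + 1)),
    ((finRotate (m + 1)) ^ k) i = i + (k : Fin (m + 1)) := by
  intro k
  induction k with
  | zero => intro i; simp
  | succ k ih =>
    intro i
    rw [pow_succ, Equiv.Perm.mul_apply, finRotate_succ_apply, ih, Nat.cast_add, Nat.cast_one]
    abel

lemma finRotate_pow_card {m : ℕ} : (finRotate (m + 1)) ^ (m + 1) = 1 := by
  ext i
  rw [finRotate_pow_apply, Fin.natCast_self, add_zero]
  rfl

lemma finRotate_exists {m : ℕ} (i j : Fin (m + 1)) :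
    ∃ k : ℕ, ((finRotate (m + 1)) ^ k) i = j := by
  refine ⟨((j - i : Fin (m + 1)) : ℕ), ?_⟩
  rw [finRotate_pow_apply, Fin.cast_val_eq_self]
  exact add_sub_cancel i j

end IndecompAux

/-- Let `C ⊆ G^n` be a cyclic group code with `|C| = p_1^{ξ_1} ⋯ p_s^{ξ_s}`
(`p_i` distinct primes, `ξ_i ≥ 1`, `|C| ≥ 2`) and `ξ = gcd(ξ_1,…,ξ_s)`. If `gcd(ξ, n) = 1`,
then `C` is indecomposable. -/
theorem cyclic_indecomposable_of_gcd_eq_one {G : Type*} [Group G] [Fintype G] [DecidableEq G]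
    {n : ℕ} (C : Subgroup (Fin n → G)) (hcyc : IsCyclicGC C) (hcard : 2 ≤ Nat.card C)
    (s : ℕ) (p ξ : Fin s → ℕ) (hp : ∀ i, Nat.Prime (p i)) (hpinj : Function.Injective p)
    (hξ : ∀ i, 1 ≤ ξ i) (hfact : Nat.card C = ∏ i, p i ^ ξ i)
    (hgcd : Nat.gcd (Finset.univ.gcd ξ) n = 1) :
    ¬ GCDecomposable C := by
  classical
  intro hdec
  -- a nontrivial codeword
  have hnt : ∃ c ∈ C, c ≠ (1 : Fin n → G) := by
    by_contra h
    push_neg at h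
    have hbot : C = ⊥ := (Subgroup.eq_bot_iff_forall C).mpr h
    rw [hbot, Subgroup.card_bot] at hcard
    omega
  obtain ⟨c₀, hc₀C, hc₀⟩ := hnt
  obtain ⟨j₀, hj₀⟩ := Function.ne_iff.mp hc₀
  have hg₀ : c₀ j₀ ≠ 1 := by simpa using hj₀
  rcases n with _ | m
  · exact j₀.elim0
  -- the ambient length is m + 1
  obtain ⟨A, hAne, hAproper, hAsplit⟩ := exists_split C hdec (c₀ j₀) hg₀
  set σ : Equiv.Perm (Fin (m + 1)) := finRotate (m + 1) with hσ
  have hσC : ∀ c ∈ C, c ∘ ⇑σ ∈ C := fun c hc => hcyc c hc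
  have hCpow : ∀ (π : Equiv.Perm (Fin (m + 1))), (∀ c ∈ C, c ∘ ⇑π ∈ C) →
      ∀ (k : ℕ), ∀ c ∈ C, c ∘ ⇑(π ^ k) ∈ C := by
    intro π hπ k
    induction k with
    | zero =>
      intro c hc
      have h : c ∘ ⇑(π ^ 0) = c := by
        funext i; simp
      rwa [h]
    | succ k ih =>
      intro c hc
      have h1 := hπ _ (ih c hc)
      have h : (c ∘ ⇑(π ^ k)) ∘ ⇑π = c ∘ ⇑(π ^ (k + 1)) := by
        funext i
        simp [pow_succ, Equiv.Perm.mul_apply]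
      rwa [h] at h1
  have hσcard : σ ^ (m + 1) = 1 := finRotate_pow_card
  have hσinv : σ⁻¹ = σ ^ m := by
    have h1 : σ ^ m * σ = 1 := by rw [← pow_succ]; exact hσcard
    exact (eq_inv_of_mul_eq_one_left h1).symm
  have hCK : ∀ (k : ℕ), ∀ c ∈ C, c ∘ ⇑(σ ^ k) ∈ C := hCpow σ hσC
  have hσinvC : ∀ c ∈ C, c ∘ ⇑σ⁻¹ ∈ C := by
    intro c hc
    rw [hσinv]
    exact hCK m c hc
  have hCKinv : ∀ (k : ℕ), ∀ c ∈ C, c ∘ ⇑((σ ^ k)⁻¹) ∈ C := by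
    intro k c hc
    rw [← inv_pow]
    exact hCpow σ⁻¹ hσinvC k c hc
  -- splitting sets are closed under intersection and rotation
  have hsplit_inter : ∀ A₁ A₂ : Finset (Fin (m + 1)), (∀ c ∈ C, mask A₁ c ∈ C) →
      (∀ c ∈ C, mask A₂ c ∈ C) → ∀ c ∈ C, mask (A₁ ∩ A₂) c ∈ C := by
    intro A₁ A₂ h1 h2 c hc
    rw [← mask_mask]
    exact h1 _ (h2 _ hc)
  have hsplit_rot : ∀ A₁ : Finset (Fin (m + 1)), (∀ c ∈ C, mask A₁ c ∈ C) →
      ∀ c ∈ C, mask (rotSet σ A₁ 1) c ∈ C := by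
    intro A₁ hA₁ c hc
    have h1 : mask A₁ (c ∘ ⇑σ) ∈ C := hA₁ _ (hσC c hc)
    have h2 : (mask A₁ (c ∘ ⇑σ)) ∘ ⇑σ⁻¹ ∈ C := hσinvC _ h1
    have heq : (mask A₁ (c ∘ ⇑σ)) ∘ ⇑σ⁻¹ = mask (rotSet σ A₁ 1) c := by
      funext i
      by_cases h : (σ ^ 1)⁻¹ i ∈ A₁
      · have h' : σ⁻¹ i ∈ A₁ := by rwa [pow_one] at h
        rw [Function.comp_apply, mask_apply_mem _ h', Function.comp_apply,
          Equiv.Perm.eq_inv_iff_eq.mp rfl, mask_apply_mem _ (mem_rotSet.mpr h)]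
      · have h' : σ⁻¹ i ∉ A₁ := by rwa [pow_one] at h
        rw [Function.comp_apply, mask_apply_not_mem _ h',
          mask_apply_not_mem _ (fun hh => h (mem_rotSet.mp hh))]
    rwa [heq] at h2
  have hsplit_rotk : ∀ (k : ℕ) (A₁ : Finset (Fin (m + 1))), (∀ c ∈ C, mask A₁ c ∈ C) →
      ∀ c ∈ C, mask (rotSet σ A₁ k) c ∈ C := by
    intro k
    induction k with
    | zero => intro A₁ hA₁; rw [rotSet_zero]; exact hA₁
    | succ k ih =>
      intro A₁ hA₁
      rw [show k + 1 = k + 1 from rfl, rotSet_add σ A₁ k 1]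
      exact hsplit_rot _ (ih _ hA₁)
  -- choose a minimal nonempty splitting set B
  have hexB : ∃ cardk : ℕ, ∃ B : Finset (Fin (m + 1)),
      ((B.Nonempty ∧ ∀ c ∈ C, mask B c ∈ C) ∧ B.card = cardk) :=
    ⟨A.card, A, ⟨hAne, hAsplit⟩, rfl⟩
  obtain ⟨B, ⟨hBne, hBsplit⟩, hBcard⟩ := Nat.find_spec hexB
  have hmin : ∀ B' : Finset (Fin (m + 1)), B'.Nonempty → (∀ c ∈ C, mask B' c ∈ C) →
      B.card ≤ B'.card := by
    intro B' h1 h2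
    rw [hBcard]
    exact Nat.find_min' hexB ⟨B', ⟨h1, h2⟩, rfl⟩
  have hsplitBk : ∀ k : ℕ, ∀ c ∈ C, mask (rotSet σ B k) c ∈ C := fun k => hsplit_rotk k B hBsplit
  have hinter : ∀ k : ℕ, (B ∩ rotSet σ B k).Nonempty → B = rotSet σ B k := by
    intro k hne'
    have hs := hsplit_inter B (rotSet σ B k) hBsplit (hsplitBk k)
    have h1 : B.card ≤ (B ∩ rotSet σ B k).card := hmin _ hne' hs
    have h2 : B ∩ rotSet σ B k = B :=
      Finset.eq_of_subset_of_card_le (fun x hx => (Finset.mem_inter.mp hx).1) h1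
    have h3 : B ⊆ rotSet σ B k := fun x hx => (Finset.mem_inter.mp (h2 ▸ hx)).2
    exact Finset.eq_of_subset_of_card_le h3 (le_of_eq (by rw [rotSet, Finset.card_map]))
  have hdiff : ∀ j k : ℕ, j ≤ k → (rotSet σ B j ∩ rotSet σ B k).Nonempty →
      B = rotSet σ B (k - j) := by
    rintro j k hjk ⟨i, hi⟩
    rw [Finset.mem_inter] at hi
    apply hinter
    refine ⟨(σ ^ j)⁻¹ i, Finset.mem_inter.mpr ⟨mem_rotSet.mp hi.1, ?_⟩⟩
    rw [mem_rotSet]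
    have h : (σ ^ (k - j))⁻¹ ((σ ^ j)⁻¹ i) = (σ ^ k)⁻¹ i := by
      rw [show σ ^ k = σ ^ j * σ ^ (k - j) from by rw [← pow_add, Nat.add_sub_cancel' hjk],
        mul_inv_rev, Equiv.Perm.mul_apply]
    rw [h]
    exact mem_rotSet.mp hi.2
  -- the period t of B under rotation
  have hper : rotSet σ B (m + 1) = B := by
    ext i
    rw [mem_rotSet, hσcard, inv_one]
    simp
  have hexT : ∃ k, 0 < k ∧ rotSet σ B k = B := ⟨m + 1, Nat.succ_pos m, hper⟩
  set t := Nat.find hexT with htdef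
  obtain ⟨ht0, htB⟩ : 0 < t ∧ rotSet σ B t = B := Nat.find_spec hexT
  have htmin : ∀ k, k < t → ¬(0 < k ∧ rotSet σ B k = B) := fun k hk => Nat.find_min hexT hk
  have hmul' : ∀ q : ℕ, rotSet σ B (t * q) = B := by
    intro q
    induction q with
    | zero => rw [Nat.mul_zero, rotSet_zero]
    | succ q ih => rw [Nat.mul_succ, rotSet_add, ih, htB]
  have hmod : ∀ k : ℕ, rotSet σ B k = rotSet σ B (k % t) := by
    intro k
    conv_lhs => rw [show k = t * (k / t) + k % t from (Nat.div_add_mod k t).symm]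
    rw [rotSet_add, hmul' (k / t)]
  have htdvd : t ∣ m + 1 := by
    have h1 : rotSet σ B ((m + 1) % t) = B := by rw [← hmod]; exact hper
    rcases Nat.eq_zero_or_pos ((m + 1) % t) with h | h
    · exact Nat.dvd_of_mod_eq_zero h
    · exact absurd ⟨h, h1⟩ (htmin _ (Nat.mod_lt _ ht0))
  have hdisj : ∀ j k : ℕ, j < t → k < t → (rotSet σ B j ∩ rotSet σ B k).Nonempty → j = k := by
    have haux : ∀ j k : ℕ, j ≤ k → k < t →
        (rotSet σ B j ∩ rotSet σ B k).Nonempty → j = k := by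
      intro j k hjk hk hne'
      have h1 := hdiff j k hjk hne'
      rcases Nat.eq_zero_or_pos (k - j) with h | h
      · omega
      · exact absurd ⟨h, h1.symm⟩ (htmin _ (by omega))
    intro j k hj hk hne'
    rcases le_total j k with h | h
    · exact haux j k h hk hne'
    · exact (haux k j h hj (by rwa [Finset.inter_comm])).symm
  obtain ⟨i₀, hi₀⟩ := hBne
  have hcover : ∀ i : Fin (m + 1), ∃ k, k < t ∧ i ∈ rotSet σ B k := by
    intro i
    obtain ⟨k, hk⟩ := finRotate_exists i₀ i
    have h1 : i ∈ rotSet σ B k := by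
      rw [mem_rotSet, ← hk]
      rw [show ⇑(finRotate (m+1) ^ k) = ⇑(σ ^ k) from by rw [hσ]]
      rw [Equiv.Perm.inv_eq_iff_eq.mpr rfl]
      exact hi₀
    exact ⟨k % t, Nat.mod_lt _ ht0, by rw [← hmod]; exact h1⟩
  have hcoverF : ∀ i : Fin (m + 1), ∃ k : Fin t, i ∈ rotSet σ B (k : ℕ) := by
    intro i
    obtain ⟨k, hk1, hk2⟩ := hcover i
    exact ⟨⟨k, hk1⟩, hk2⟩
  choose κ hκ using hcoverF
  have hκuniq : ∀ (i : Fin (m + 1)) (k : Fin t), i ∈ rotSet σ B (k : ℕ) → κ i = k := by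
    intro i k hik
    exact Fin.ext (hdisj (κ i : ℕ) (k : ℕ) (κ i).isLt k.isLt
      ⟨i, Finset.mem_inter.mpr ⟨hκ i, hik⟩⟩)
  -- the subgroup S of sections over B
  set S : Subgroup (Fin (m + 1) → G) :=
    Subgroup.map (MonoidHom.mk' (mask B) (mask_mul B)) C with hSdef
  have hmemS : ∀ z, z ∈ S ↔ ∃ c ∈ C, mask B c = z := by
    intro z
    rw [hSdef, Subgroup.mem_map]
    exact Iff.rfl
  -- the bijection C ≃ (Fin t → S)
  have hΦmem : ∀ (c : ↥C) (k : Fin t), mask B ((c : Fin (m + 1) → G) ∘ ⇑(σ ^ (k : ℕ))) ∈ S :=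
    fun c k => (hmemS _).mpr ⟨_, hCK (k : ℕ) _ c.2, rfl⟩
  set Φm : ↥C → (Fin t → ↥S) :=
    fun c k => ⟨mask B ((c : Fin (m + 1) → G) ∘ ⇑(σ ^ (k : ℕ))), hΦmem c k⟩ with hΦdef
  have hΦinj : Function.Injective Φm := by
    intro c c' h
    have h' : ∀ k : Fin t, mask B ((c : Fin (m + 1) → G) ∘ ⇑(σ ^ (k : ℕ)))
        = mask B ((c' : Fin (m + 1) → G) ∘ ⇑(σ ^ (k : ℕ))) := by
      intro k
      have := congrFun h k
      rw [hΦdef] at this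
      exact congrArg Subtype.val this
    apply Subtype.ext
    funext i
    obtain ⟨k, hk, hik⟩ := hcover i
    have h2 := congrFun (h' ⟨k, hk⟩) ((σ ^ k)⁻¹ i)
    have hmemB : (σ ^ k)⁻¹ i ∈ B := mem_rotSet.mp hik
    rw [mask_apply_mem _ hmemB, mask_apply_mem _ hmemB, Function.comp_apply,
      Function.comp_apply] at h2
    simpa using h2
  have hΦsurj : Function.Surjective Φm := by
    intro f
    have hch : ∀ k : Fin t, ∃ c, c ∈ C ∧ mask B c = ((f k : Fin (m + 1) → G)) := by
      intro k
      obtain ⟨c, hc, hceq⟩ := (hmemS _).mp (f k).2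
      exact ⟨c, hc, hceq⟩
    choose cf hcf1 hcf2 using hch
    set g : Fin (m + 1) → G := fun i => cf (κ i) ((σ ^ ((κ i : ℕ)))⁻¹ i) with hgdef
    have hgapp : ∀ i, g i = cf (κ i) ((σ ^ ((κ i : ℕ)))⁻¹ i) := fun i => by rw [hgdef]
    have hgBk : ∀ k : Fin t,
        mask (rotSet σ B (k : ℕ)) g = (mask B (cf k)) ∘ ⇑((σ ^ (k : ℕ))⁻¹) := by
      intro k
      funext i
      by_cases hi : i ∈ rotSet σ B (k : ℕ)
      · rw [mask_apply_mem _ hi, hgapp i, hκuniq i k hi, Function.comp_apply,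
          mask_apply_mem _ (mem_rotSet.mp hi)]
      · rw [mask_apply_not_mem _ hi, Function.comp_apply,
          mask_apply_not_mem _ (fun hh => hi (mem_rotSet.mpr hh))]
    have hgC : g ∈ C := by
      have hstep : ∀ l, l ≤ t →
          mask ((Finset.range l).biUnion (fun j => rotSet σ B j)) g ∈ C := by
        intro l
        induction l with
        | zero =>
          intro _
          have h : mask ((Finset.range 0).biUnion fun j => rotSet σ B j) g = 1 := by
            funext i
            rw [mask_apply_not_mem]
            · rfl
            · simp
          rw [h]
          exact C.one_mem
        | succ l ih =>
          intro hl
          have hl' : l ≤ t := Nat.le_of_succ_le hl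
          have h1 := ih hl'
          have h2 : mask (rotSet σ B l) g ∈ C := by
            have := hgBk ⟨l, hl⟩
            simp only [] at this
            rw [this]
            exact hCKinv l _ (hBsplit _ (hcf1 _))
          have heq : mask ((Finset.range (l + 1)).biUnion fun j => rotSet σ B j) g
              = mask ((Finset.range l).biUnion fun j => rotSet σ B j) g
                * mask (rotSet σ B l) g := by
            funext i
            rw [Pi.mul_apply]
            by_cases hbl : i ∈ rotSet σ B l
            · have hnotU : i ∉ (Finset.range l).biUnion fun j => rotSet σ B j := by
                intro hmem
                obtain ⟨j, hj, hij⟩ := Finset.mem_biUnion.mp hmem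
                rw [Finset.mem_range] at hj
                have := hdisj j l (by omega) (by omega)
                  ⟨i, Finset.mem_inter.mpr ⟨hij, hbl⟩⟩
                omega
              rw [mask_apply_not_mem _ hnotU, one_mul, mask_apply_mem _ hbl,
                mask_apply_mem _ (Finset.mem_biUnion.mpr
                  ⟨l, Finset.mem_range.mpr (by omega), hbl⟩)]
            · by_cases hU : i ∈ (Finset.range l).biUnion fun j => rotSet σ B j
              · have hU' : i ∈ (Finset.range (l + 1)).biUnion fun j => rotSet σ B j := by
                  obtain ⟨j, hj, hij⟩ := Finset.mem_biUnion.mp hU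
                  rw [Finset.mem_range] at hj
                  exact Finset.mem_biUnion.mpr ⟨j, Finset.mem_range.mpr (by omega), hij⟩
                rw [mask_apply_mem _ hU', mask_apply_mem _ hU,
                  mask_apply_not_mem _ hbl, mul_one]
              · have hU' : i ∉ (Finset.range (l + 1)).biUnion fun j => rotSet σ B j := by
                  intro hmem
                  obtain ⟨j, hj, hij⟩ := Finset.mem_biUnion.mp hmem
                  rw [Finset.mem_range] at hj
                  rcases Nat.lt_succ_iff_lt_or_eq.mp hj with h | h
                  · exact hU (Finset.mem_biUnion.mpr ⟨j, Finset.mem_range.mpr h, hij⟩)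
                  · subst h; exact hbl hij
                rw [mask_apply_not_mem _ hU', mask_apply_not_mem _ hU,
                  mask_apply_not_mem _ hbl, mul_one]
          rw [heq]
          exact C.mul_mem h1 h2
      have hfin := hstep t le_rfl
      have huniv : mask ((Finset.range t).biUnion fun j => rotSet σ B j) g = g := by
        funext i
        exact mask_apply_mem _ (Finset.mem_biUnion.mpr
          ⟨(κ i : ℕ), Finset.mem_range.mpr (κ i).isLt, hκ i⟩)
      rwa [huniv] at hfin
    refine ⟨⟨g, hgC⟩, ?_⟩
    funext k
    apply Subtype.ext
    rw [hΦdef]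
    show mask B (g ∘ ⇑(σ ^ (k : ℕ))) = ((f k : Fin (m + 1) → G))
    rw [← hcf2 k]
    funext i
    by_cases hi : i ∈ B
    · rw [mask_apply_mem _ hi, mask_apply_mem _ hi, Function.comp_apply]
      have hmem2 : (σ ^ (k : ℕ)) i ∈ rotSet σ B (k : ℕ) :=
        mem_rotSet.mpr (by rw [Equiv.Perm.inv_eq_iff_eq.mpr rfl]; exact hi)
      have h2 := congrFun (hgBk k) ((σ ^ (k : ℕ)) i)
      rw [mask_apply_mem _ hmem2] at h2
      rw [h2, Function.comp_apply, Equiv.Perm.inv_eq_iff_eq.mpr rfl, mask_apply_mem _ hi]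
    · rw [mask_apply_not_mem _ hi, mask_apply_not_mem _ hi]
  -- cardinality computation
  have hcardeq : Nat.card ↥C = Nat.card ↥S ^ t := by
    have h1 : Nat.card ↥C = Nat.card (Fin t → ↥S) :=
      Nat.card_congr (Equiv.ofBijective Φm ⟨hΦinj, hΦsurj⟩)
    rw [Nat.card_pi, Finset.prod_const, Finset.card_univ, Fintype.card_fin] at h1
    exact h1
  have hS2 : 2 ≤ Nat.card ↥S := by
    have hSne : ∃ z ∈ S, z ≠ (1 : Fin (m + 1) → G) := by
      obtain ⟨k, hk⟩ := finRotate_exists i₀ j₀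
      have hk' : (σ ^ k) i₀ = j₀ := by rw [hσ]; exact hk
      refine ⟨mask B (c₀ ∘ ⇑(σ ^ k)), (hmemS _).mpr ⟨_, hCK k c₀ hc₀C, rfl⟩, ?_⟩
      intro h1
      have h2 := congrFun h1 i₀
      rw [mask_apply_mem _ hi₀, Function.comp_apply, hk'] at h2
      exact hg₀ h2
    obtain ⟨z, hz, hz1⟩ := hSne
    have hSbot : S ≠ ⊥ := by
      intro h
      rw [h, Subgroup.mem_bot] at hz
      exact hz1 hz
    have := (Subgroup.one_lt_card_iff_ne_bot (H := S)).mpr hSbot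
    omega
  -- number theory: t divides every exponent ξ j
  have hNfact : ∀ j : Fin s, ξ j = (Nat.card ↥C).factorization (p j) := by
    intro j
    rw [hfact, Nat.factorization_prod (fun i _ => pow_ne_zero _ (hp i).pos.ne')]
    rw [Finsupp.finset_sum_apply]
    rw [Finset.sum_eq_single j]
    · rw [Nat.factorization_pow, Finsupp.smul_apply, (hp j).factorization,
        Finsupp.single_eq_same, smul_eq_mul, mul_one]
    · intro b _ hbj
      rw [Nat.factorization_pow, Finsupp.smul_apply, (hp b).factorization,
        Finsupp.single_apply, if_neg (fun h => hbj (hpinj h)), smul_zero]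
    · intro h
      exact absurd (Finset.mem_univ j) h
  have htdvdξ : ∀ j : Fin s, t ∣ ξ j := by
    intro j
    rw [hNfact j, hcardeq, Nat.factorization_pow, Finsupp.smul_apply, smul_eq_mul]
    exact Dvd.intro _ rfl
  have ht1 : t = 1 := by
    have h1 : t ∣ Finset.univ.gcd ξ := Finset.dvd_gcd (fun i _ => htdvdξ i)
    have h2 : t ∣ Nat.gcd (Finset.univ.gcd ξ) (m + 1) := Nat.dvd_gcd h1 htdvd
    rw [hgcd] at h2
    exact Nat.dvd_one.mp h2
  -- t = 1 forces B = univ, contradicting B.card ≤ A.card < m + 1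
  have hBuniv : B = Finset.univ := by
    apply Finset.eq_univ_iff_forall.mpr
    intro i
    obtain ⟨k, hk, hik⟩ := hcover i
    have hk0 : k = 0 := by omega
    subst hk0
    rwa [rotSet_zero] at hik
  have hAcard : A.card < m + 1 := by
    have h1 : A ⊂ Finset.univ := Finset.ssubset_univ_iff.mpr hAproper
    have h2 := Finset.card_lt_card h1
    simpa using h2
  have hle := hmin A hAne hAsplit
  rw [hBuniv] at hle
  simp only [Finset.card_univ, Fintype.card_fin] at hle
  omega
end

section
/- If D ⊆ G^m is a cyclic group code and ℓ ≥ 1, then the direct sum D^ℓ of ℓ copies of D is isomorphic as a group code to a cyclic group code C ⊆ G^{ℓm}. -/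
section MyAux
variable {G : Type*} [Group G] [DecidableEq G]

lemma myAux_mul_lt {a b l m : ℕ} (ha : a < l) (hb : b < m) : a * m + b < l * m := by
  have h1 : a * m + b < (a + 1) * m := by rw [add_mul, one_mul]; omega
  have h2 : (a + 1) * m ≤ l * m := Nat.mul_le_mul_right m ha
  omega

lemma mySum_const_fin (l m : ℕ) : (∑ _ : Fin l, m) = l * m := by
  simp [Finset.sum_const, mul_comm]

lemma myIdx_lt {l m : ℕ} (i : Fin l) (j : Fin m) :
    (i : ℕ) * m + (j : ℕ) < ∑ _ : Fin l, m := by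
  rw [mySum_const_fin]; exact myAux_mul_lt i.isLt j.isLt

lemma myIdx_lt' {l m : ℕ} (i : Fin l) (j : Fin m) :
    (j : ℕ) * l + (i : ℕ) < ∑ _ : Fin l, m := by
  rw [mySum_const_fin]
  have h := myAux_mul_lt j.isLt i.isLt
  rwa [Nat.mul_comm m l] at h

lemma myMod_lemma {a b mm : ℕ} (hb : b < mm) : (a * mm + b) % mm = b := by
  rw [add_comm, Nat.add_mul_mod_self_right, Nat.mod_eq_of_lt hb]

lemma myDiv_lemma {a b mm : ℕ} (hmm : 0 < mm) (hb : b < mm) : (a * mm + b) / mm = a := by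
  rw [add_comm, Nat.add_mul_div_right _ _ hmm, Nat.div_eq_of_lt hb, zero_add]

lemma myHammingDist_comp_equiv {n n' : ℕ} (e : Fin n ≃ Fin n') (x y : Fin n' → G) :
    hammingDist (x ∘ e) (y ∘ e) = hammingDist x y := by
  simp only [hammingDist]
  apply Finset.card_bij' (fun a _ => e a) (fun b _ => e.symm b) <;> simp

lemma myMem_gcMultiSum_const {m : ℕ} (D : Subgroup (Fin m → G)) :
    ∀ (l : ℕ) (x : Fin (∑ _ : Fin l, m) → G),
      x ∈ gcMultiSum (fun _ : Fin l => D) ↔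
        ∀ i : Fin l, (fun j : Fin m => x ⟨(i : ℕ) * m + j, myIdx_lt i j⟩) ∈ D := by
  intro l
  induction l with
  | zero =>
    intro x
    exact iff_of_true trivial (fun i => i.elim0)
  | succ l ih =>
    intro x
    simp only [gcMultiSum, Subgroup.mem_comap, gcSum, Subgroup.mem_prod, splitHom,
      reindexHom, MonoidHom.coe_mk, OneHom.coe_mk]
    rw [ih]
    constructor
    · rintro ⟨h0, hs⟩ i
      refine Fin.cases ?_ (fun i' => ?_) i
      · have he : (fun j : Fin m =>
            x ⟨((0 : Fin (l+1)) : ℕ) * m + j, myIdx_lt 0 j⟩) =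
            (fun i => x (Fin.cast (Fin.sum_univ_succ (fun _ => m)).symm (Fin.castAdd _ i))) := by
          funext j; congr 1; exact Fin.ext (by simp)
        rw [he]; exact h0
      · have he : (fun j : Fin m =>
            x ⟨((i'.succ : Fin (l+1)) : ℕ) * m + j, myIdx_lt i'.succ j⟩) =
            (fun j : Fin m => x (Fin.cast (Fin.sum_univ_succ (fun _ => m)).symm
              (Fin.natAdd m ⟨(i' : ℕ) * m + j, myIdx_lt i' j⟩))) := by
          funext j; congr 1
          refine Fin.ext ?_
          simp [Fin.val_succ, add_mul]
          omega
        rw [he]; exact hs i'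
    · intro hall
      constructor
      · have he : (fun i => x (Fin.cast (Fin.sum_univ_succ (fun _ => m)).symm
            (Fin.castAdd _ i))) =
            (fun j : Fin m => x ⟨((0 : Fin (l+1)) : ℕ) * m + j, myIdx_lt 0 j⟩) := by
          funext j; congr 1; exact Fin.ext (by simp)
        rw [he]; exact hall 0
      · intro i'
        have he : (fun j : Fin m => x (Fin.cast (Fin.sum_univ_succ (fun _ => m)).symm
            (Fin.natAdd m ⟨(i' : ℕ) * m + j, myIdx_lt i' j⟩))) =
            (fun j : Fin m => x ⟨((i'.succ : Fin (l+1)) : ℕ) * m + j, myIdx_lt i'.succ j⟩) := by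
          funext j; congr 1
          refine Fin.ext ?_
          simp [Fin.val_succ, add_mul]
          omega
        rw [he]; exact hall i'.succ

lemma myMem_gcPow {m : ℕ} (D : Subgroup (Fin m → G)) (l : ℕ)
    (x : Fin (∑ _ : Fin l, m) → G) :
    x ∈ gcPow D l ↔
      ∀ i : Fin l, (fun j : Fin m => x ⟨(i : ℕ) * m + j, myIdx_lt i j⟩) ∈ D :=
  myMem_gcMultiSum_const D l x

/-- The "transpose" permutation of `Fin (ℓm)`. -/
def myStrideEquiv (l m : ℕ) (hl : 0 < l) (hm : 0 < m) :
    Fin (∑ _ : Fin l, m) ≃ Fin (∑ _ : Fin l, m) where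
  toFun k := ⟨((k : ℕ) % l) * m + (k : ℕ) / l, by
    have hk : (k : ℕ) < l * m := lt_of_lt_of_eq k.isLt (mySum_const_fin l m)
    have h1 : (k : ℕ) / l < m := by rw [Nat.div_lt_iff_lt_mul hl, mul_comm]; exact hk
    exact lt_of_lt_of_eq (myAux_mul_lt (Nat.mod_lt _ hl) h1) (mySum_const_fin l m).symm⟩
  invFun k := ⟨((k : ℕ) % m) * l + (k : ℕ) / m, by
    have hk : (k : ℕ) < m * l := lt_of_lt_of_eq k.isLt
      ((mySum_const_fin l m).trans (Nat.mul_comm l m))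
    have h1 : (k : ℕ) / m < l := by rw [Nat.div_lt_iff_lt_mul hm, mul_comm]; exact hk
    exact lt_of_lt_of_eq (myAux_mul_lt (Nat.mod_lt _ hm) h1)
      ((Nat.mul_comm m l).trans (mySum_const_fin l m).symm)⟩
  left_inv k := by
    refine Fin.ext ?_
    have hk : (k : ℕ) < l * m := lt_of_lt_of_eq k.isLt (mySum_const_fin l m)
    have hb : (k : ℕ) / l < m := by rw [Nat.div_lt_iff_lt_mul hl, mul_comm]; exact hk
    show ((k : ℕ) % l * m + (k : ℕ) / l) % m * l + ((k : ℕ) % l * m + (k : ℕ) / l) / m = k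
    rw [myMod_lemma hb, myDiv_lemma hm hb, mul_comm, Nat.div_add_mod]
  right_inv k := by
    refine Fin.ext ?_
    have hk : (k : ℕ) < m * l := lt_of_lt_of_eq k.isLt
      ((mySum_const_fin l m).trans (Nat.mul_comm l m))
    have hb : (k : ℕ) / m < l := by rw [Nat.div_lt_iff_lt_mul hm, mul_comm]; exact hk
    show ((k : ℕ) % m * l + (k : ℕ) / m) % l * m + ((k : ℕ) % m * l + (k : ℕ) / m) / l = k
    rw [myMod_lemma hb, myDiv_lemma hl hb, mul_comm, Nat.div_add_mod]

/-- Pre-composition with `myStrideEquiv`, as a `MulEquiv`. -/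
def myStrideMulEquiv (G : Type*) [Group G] (l m : ℕ) (hl : 0 < l) (hm : 0 < m) :
    (Fin (∑ _ : Fin l, m) → G) ≃* (Fin (∑ _ : Fin l, m) → G) where
  toFun x := x ∘ (myStrideEquiv l m hl hm)
  invFun x := x ∘ (myStrideEquiv l m hl hm).symm
  left_inv x := by funext k; simp [Function.comp]
  right_inv x := by funext k; simp [Function.comp]
  map_mul' _ _ := rfl

lemma myFinRotate_val {n : ℕ} (k : Fin n) : ((finRotate n k) : ℕ) = ((k : ℕ) + 1) % n := by
  cases n with
  | zero => exact k.elim0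
  | succ n =>
    rw [finRotate_succ_apply, Fin.add_def, Fin.val_one']
    conv_rhs => rw [Nat.add_mod]
    rw [Nat.mod_eq_of_lt k.isLt]

end MyAux

/-- If `D ⊆ G^m` is a cyclic group code and `ℓ ≥ 1`, then the direct sum
`D^ℓ` of `ℓ` copies of `D` is isomorphic, as a group code, to a cyclic group code of
length `ℓ·m`. -/
theorem pow_of_cyclic_iso_cyclic {G : Type*} [Group G] [Fintype G] [DecidableEq G]
    {m : ℕ} (hm : 0 < m) (D : Subgroup (Fin m → G)) (hcyc : IsCyclicGC D)
    (ℓ : ℕ) (hℓ : 1 ≤ ℓ) :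
    ∃ C : Subgroup (Fin (∑ _ : Fin ℓ, m) → G),
      IsCyclicGC C ∧ GroupCodeIso (gcPow D ℓ) C := by
  have hℓ' : 0 < ℓ := hℓ
  set n : ℕ := ∑ _ : Fin ℓ, m with hn
  have hnval : n = ℓ * m := mySum_const_fin ℓ m
  set e : Fin n ≃ Fin n := myStrideEquiv ℓ m hℓ' hm with he
  set Φ : (Fin n → G) ≃* (Fin n → G) := myStrideMulEquiv G ℓ m hℓ' hm with hΦ
  set C : Subgroup (Fin n → G) := Subgroup.map Φ.toMonoidHom (gcPow D ℓ) with hC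
  -- characterize membership in C
  have hmemC : ∀ z : Fin n → G, z ∈ C ↔
      ∀ i : Fin ℓ, (fun j : Fin m => z ⟨(j : ℕ) * ℓ + i, myIdx_lt' i j⟩) ∈ D := by
    intro z
    rw [hC, Subgroup.mem_map_equiv, myMem_gcPow]
    refine forall_congr' fun i => ?_
    have he2 : (fun j : Fin m => (Φ.symm z) ⟨(i : ℕ) * m + j, myIdx_lt i j⟩) =
        (fun j : Fin m => z ⟨(j : ℕ) * ℓ + i, myIdx_lt' i j⟩) := by
      funext j
      show z (e.symm ⟨(i : ℕ) * m + j, myIdx_lt i j⟩) = _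
      congr 1
      refine Fin.ext ?_
      show (((i : ℕ) * m + j) % m) * ℓ + ((i : ℕ) * m + j) / m = (j : ℕ) * ℓ + i
      rw [myMod_lemma j.isLt, myDiv_lemma hm j.isLt]
    rw [he2]
  refine ⟨C, ?_, ?_⟩
  · -- C is cyclic
    intro z hz
    rw [hmemC] at hz ⊢
    intro i
    rcases Nat.lt_or_ge ((i : ℕ) + 1) ℓ with hi | hi
    · have he2 : (fun j : Fin m => (z ∘ finRotate n) ⟨(j : ℕ) * ℓ + i, myIdx_lt' i j⟩) =
          (fun j : Fin m => z ⟨(j : ℕ) * ℓ + (⟨(i : ℕ) + 1, hi⟩ : Fin ℓ),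
            myIdx_lt' ⟨(i : ℕ) + 1, hi⟩ j⟩) := by
        funext j
        show z (finRotate n ⟨(j : ℕ) * ℓ + i, myIdx_lt' i j⟩) = _
        congr 1
        refine Fin.ext ?_
        rw [myFinRotate_val]
        show ((j : ℕ) * ℓ + i + 1) % n = (j : ℕ) * ℓ + ((i : ℕ) + 1)
        have h2 : (j : ℕ) * ℓ + ((i : ℕ) + 1) < ℓ * m := by
          have h3 := myAux_mul_lt j.isLt hi
          rw [Nat.mul_comm m ℓ] at h3
          exact h3
        have h4 : (j : ℕ) * ℓ + i + 1 = (j : ℕ) * ℓ + ((i : ℕ) + 1) := by omega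
        rw [hnval, h4, Nat.mod_eq_of_lt h2]
      rw [he2]
      exact hz _
    · -- wrap-around column: i + 1 = ℓ
      have hieq : (i : ℕ) + 1 = ℓ := le_antisymm i.isLt hi
      have h0 := hz ⟨0, hℓ'⟩
      have h0' := hcyc _ h0
      have he2 : (fun j : Fin m => (z ∘ finRotate n) ⟨(j : ℕ) * ℓ + i, myIdx_lt' i j⟩) =
          ((fun j : Fin m => z ⟨(j : ℕ) * ℓ + (⟨0, hℓ'⟩ : Fin ℓ),
            myIdx_lt' ⟨0, hℓ'⟩ j⟩) ∘ finRotate m) := by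
        funext j
        show z (finRotate n ⟨(j : ℕ) * ℓ + i, myIdx_lt' i j⟩) =
          z ⟨((finRotate m j : Fin m) : ℕ) * ℓ + 0, _⟩
        congr 1
        refine Fin.ext ?_
        rw [myFinRotate_val]
        show ((j : ℕ) * ℓ + i + 1) % n = ((finRotate m j : Fin m) : ℕ) * ℓ + 0
        rw [myFinRotate_val, Nat.add_zero, hnval]
        have hrw : (j : ℕ) * ℓ + i + 1 = ((j : ℕ) + 1) * ℓ := by
          rw [add_mul, one_mul]; omega
        rw [hrw]
        rcases Nat.lt_or_ge ((j : ℕ) + 1) m with hj | hj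
        · have h2 : ((j : ℕ) + 1) * ℓ < ℓ * m := by
            have h3 := myAux_mul_lt hj hℓ'
            rw [Nat.mul_comm m ℓ] at h3
            omega
          rw [Nat.mod_eq_of_lt hj, Nat.mod_eq_of_lt h2]
          omega
        · have hjeq : (j : ℕ) + 1 = m := le_antisymm j.isLt hj
          have hl1 : (m * ℓ) % (ℓ * m) = 0 := by rw [Nat.mul_comm m ℓ, Nat.mod_self]
          rw [hjeq, hl1, Nat.mod_self, Nat.zero_mul]
      rw [he2]
      exact h0'
  · -- iso
    refine ⟨Φ, Φ.symm, ⟨fun x y => Φ.map_mul x y, fun x hx => ?_, fun x y => ?_⟩,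
      ⟨fun x y => Φ.symm.map_mul x y, fun x hx => ?_, fun x y => ?_⟩,
      Φ.left_inv, Φ.right_inv⟩
    · exact Subgroup.mem_map_of_mem _ hx
    · exact le_of_eq (myHammingDist_comp_equiv e x y)
    · exact (Subgroup.mem_map_equiv).mp hx
    · exact le_of_eq (myHammingDist_comp_equiv e.symm x y)
end
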